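/- arXiv:2407.08809 — 8 statements merged into one kernel-verified Lean document; each statement's English description precedes it below -/
import Mathlib

section
/- Let G be a group, let H ≤ G be a subgroup of finite index, and let K ≤ H be a subgroup that is quasi-algebraic as a subset of the group H. Then K, regarded as a subset of G, is quasi-algebraic in G. -/
/-- The solution set `V_{G,A}(S)` of a system of equations `S ⊆ F_m` over a group `G`,
relative to a subset `A ⊆ G`: tuples `(g_1, …, g_m)` such that every `s ∈ S` evaluates
into `A` under the homomorphism `F_m → G` sending the basis to the tuple. -/
def eqnSolutions {G : Type*} [Group G] (A : Set G) {m : ℕ}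
    (S : Set (FreeGroup (Fin m))) : Set (Fin m → G) :=
  {g | ∀ s ∈ S, FreeGroup.lift g s ∈ A}

/-- A subset `A` of a group `G` is quasi-algebraic if every system of equations is
equivalent (relative to `A`) to a finite subsystem. -/
def QuasiAlgebraic (G : Type*) [Group G] (A : Set G) : Prop :=
  ∀ m : ℕ, 1 ≤ m → ∀ S : Set (FreeGroup (Fin m)),
    ∃ S₀ : Finset (FreeGroup (Fin m)), ↑S₀ ⊆ S ∧
      eqnSolutions A (↑S₀ : Set (FreeGroup (Fin m))) = eqnSolutions A S

/-- A group is equationally Noetherian if `{1}` is quasi-algebraic in it. -/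
def EquationallyNoetherian (G : Type*) [Group G] : Prop :=
  QuasiAlgebraic G ({1} : Set G)

/-!
Let `π : G → Q` be the quotient by the normal core of `H`, a finite group. Whether `w(g)` lies
in `H` depends only on the tuple `π ∘ g`, so the tuples split into finitely many types and it
suffices to find, for each type `c`, a finite subsystem that controls all tuples of type `c`.
The words `w` with `w(g) ∈ H` for tuples of type `c` form a finite-index, hence finitely
generated, subgroup `L` of the free group. If `S ⊄ L`, one equation of `S` outside `L` already
has no solution of type `c`. If `S ⊆ L`, evaluation at a tuple of type `c` is a homomorphism
`L → H`, and quasi-algebraicity of the subset in `H`, pulled back along a free presentation of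
`L`, provides the finite subsystem.
-/

open Subgroup

theorem exists_surjective_freeGroup_fin_succ (Γ : Type*) [Group Γ] [Group.FG Γ] :
    ∃ n : ℕ, ∃ β : FreeGroup (Fin (n + 1)) →* Γ, Function.Surjective β := by
  obtain ⟨α, _, φ, hφ⟩ := Group.fg_iff_exists_freeGroup_hom_surjective_finite.mp ‹Group.FG Γ›
  obtain ⟨n, ⟨e⟩⟩ := Finite.exists_equiv_fin α
  refine ⟨n, FreeGroup.lift (Fin.cons 1 (φ ∘ FreeGroup.of ∘ e.symm)), ?_⟩
  have hcomp : (FreeGroup.lift (Fin.cons 1 (φ ∘ FreeGroup.of ∘ e.symm))).comp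
      (FreeGroup.map (Fin.succ ∘ e)) = φ := FreeGroup.ext_hom _ _ fun _ => by simp
  rw [← hcomp, MonoidHom.coe_comp] at hφ
  exact hφ.of_comp

section

variable {G : Type*} [Group G]

theorem eqnSolutions_anti {A : Set G} {m : ℕ} {S T : Set (FreeGroup (Fin m))} (h : S ⊆ T) :
    eqnSolutions A T ⊆ eqnSolutions A S :=
  fun _ hg s hs => hg s (h hs)

theorem QuasiAlgebraic.exists_finset_forall_hom {A : Set G} (hA : QuasiAlgebraic G A)
    {Γ : Type*} [Group Γ] [Group.FG Γ] (S : Set Γ) :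
    ∃ S₀ : Finset Γ, ↑S₀ ⊆ S ∧ ∀ f : Γ →* G, (∀ s ∈ S₀, f s ∈ A) → ∀ s ∈ S, f s ∈ A := by
  classical
  obtain ⟨n, β, hβ⟩ := exists_surjective_freeGroup_fin_succ Γ
  obtain ⟨U₀, hU₀S, hU₀⟩ := hA (n + 1) n.succ_pos (β ⁻¹' S)
  refine ⟨U₀.image β, by simpa [Set.image_subset_iff] using hU₀S, ?_⟩
  intro f hf s hs
  obtain ⟨u, rfl⟩ := hβ s
  have hlift : FreeGroup.lift (f ∘ β ∘ FreeGroup.of) = f.comp β :=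
    FreeGroup.ext_hom _ _ fun _ => by simp
  have hsol : f ∘ β ∘ FreeGroup.of ∈ eqnSolutions A (U₀ : Set (FreeGroup (Fin (n + 1)))) :=
    fun v hv => by rw [hlift]; exact hf _ (Finset.mem_image_of_mem β hv)
  rw [hU₀] at hsol
  simpa [hlift] using hsol u hs

theorem exists_finset_eqnSolutions_eq_of_fibers {A : Set G} {m : ℕ}
    {S : Set (FreeGroup (Fin m))} {C : Type*} [Finite C] (τ : (Fin m → G) → C)
    (h : ∀ c, ∃ T : Finset (FreeGroup (Fin m)), ↑T ⊆ S ∧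
      ∀ g, τ g = c → g ∈ eqnSolutions A (T : Set (FreeGroup (Fin m))) → g ∈ eqnSolutions A S) :
    ∃ S₀ : Finset (FreeGroup (Fin m)), ↑S₀ ⊆ S ∧
      eqnSolutions A (S₀ : Set (FreeGroup (Fin m))) = eqnSolutions A S := by
  classical
  have := Fintype.ofFinite C
  choose T hTS hT using h
  have hS₀S : ↑(Finset.univ.biUnion T) ⊆ S := by simpa using hTS
  refine ⟨Finset.univ.biUnion T, hS₀S, subset_antisymm (fun g hg => ?_) (eqnSolutions_anti hS₀S)⟩
  exact hT _ g rfl (eqnSolutions_anti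
    (Finset.coe_subset.2 (Finset.subset_biUnion_of_mem T (Finset.mem_univ (τ g)))) hg)

section KerLe

variable {Q : Type*} [Group Q] {π : G →* Q} {H : Subgroup G}

theorem lift_mem_iff_mem_comap_lift (hπ : π.ker ≤ H) {m : ℕ} (g : Fin m → G)
    (w : FreeGroup (Fin m)) :
    FreeGroup.lift g w ∈ H ↔ w ∈ (H.map π).comap (FreeGroup.lift (π ∘ g)) := by
  have hπg : FreeGroup.lift (π ∘ g) w = π (FreeGroup.lift g w) :=
    (FreeGroup.lift_unique (π.comp (FreeGroup.lift g)) fun _ => by simp).symm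
  have hH : (H.map π).comap π = H := by rw [comap_map_eq, sup_eq_left.mpr hπ]
  rw [mem_comap, hπg, ← mem_comap (f := π), hH]

variable [Finite Q] {A : Set H}

theorem QuasiAlgebraic.exists_finset_of_comp_eq (hπ : π.ker ≤ H) (hA : QuasiAlgebraic H A)
    {m : ℕ} (S : Set (FreeGroup (Fin m))) (c : Fin m → Q) :
    ∃ T : Finset (FreeGroup (Fin m)), ↑T ⊆ S ∧ ∀ g : Fin m → G, π ∘ g = c →
      g ∈ eqnSolutions (Subtype.val '' A) (T : Set (FreeGroup (Fin m))) →
      g ∈ eqnSolutions (Subtype.val '' A) S := by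
  classical
  set L := (H.map π).comap (FreeGroup.lift c)
  by_cases hSL : S ⊆ L
  · have : L.FiniteIndex := ⟨by rw [index_comap]; exact index_ne_zero_of_finite⟩
    have : Group.FG L := fg_of_index_ne_zero L
    obtain ⟨T, hTS, hT⟩ := hA.exists_finset_forall_hom (Subtype.val ⁻¹' S : Set L)
    refine ⟨T.map (Function.Embedding.subtype _), fun _ hs => ?_, ?_⟩
    · obtain ⟨w, hw, rfl⟩ := Finset.mem_map.mp hs
      exact hTS hw
    rintro g rfl hg s hs
    let f : L →* H := ((FreeGroup.lift g).comp L.subtype).codRestrict H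
      fun w => (lift_mem_iff_mem_comap_lift hπ g w).2 w.2
    refine ⟨f ⟨s, hSL hs⟩, hT f (fun w hw => ?_) ⟨s, hSL hs⟩ hs, rfl⟩
    exact Subtype.val_injective.mem_set_image.1 (hg _ (Finset.mem_map_of_mem _ hw))
  · obtain ⟨s, hs, hsL⟩ := Set.not_subset.mp hSL
    refine ⟨{s}, by simpa using hs, ?_⟩
    rintro g rfl hg
    obtain ⟨y, -, hy⟩ := hg s (Finset.mem_singleton_self s)
    exact absurd ((lift_mem_iff_mem_comap_lift hπ g s).1 (hy ▸ y.2)) hsL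

theorem QuasiAlgebraic.image_val_of_ker_le (hπ : π.ker ≤ H) (hA : QuasiAlgebraic H A) :
    QuasiAlgebraic G (Subtype.val '' A) :=
  fun _ _ S => exists_finset_eqnSolutions_eq_of_fibers (π ∘ ·) (hA.exists_finset_of_comp_eq hπ S)

end KerLe

end

/-- Proposition: quasi-algebraicity of subgroups passes to finite extensions: if
`H ≤ G` has finite index and `K ≤ H` is quasi-algebraic in `H`, then `K`, regarded
as a subset of `G`, is quasi-algebraic in `G`. -/
theorem quasiAlgebraic_of_finiteIndex (G : Type*) [Group G] (H : Subgroup G)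
    (hH : H.FiniteIndex) (K : Subgroup H)
    (hK : QuasiAlgebraic H (K : Set H)) :
    QuasiAlgebraic G ((K.map H.subtype : Subgroup G) : Set G) := by
  rw [coe_map]
  exact hK.image_val_of_ker_le (π := QuotientGroup.mk' H.normalCore)
    (by rw [QuotientGroup.ker_mk']; exact H.normalCore_le)
end

section
/- Let G be a finitely generated group and let Z ⊴ G be a finitely generated normal subgroup that is undistorted in G and has sub-exponential growth. Then ξ(G/Z) = ξ(G), i.e. the set of exponential growth rates of the quotient G/Z equals the set of exponential growth rates of G. -/
/-!
The `k`-ball of `S` is the pointwise power `(insert 1 (S ∪ S⁻¹)) ^ k`, so the projection maps it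
onto the `k`-ball of the image of `S` in `G ⧸ Z`, and `|B_k(G ⧸ Z)| ≤ |B_k(G)|`.
Conversely, every fibre of that projection is a translate of a subset of `Z ∩ B_{2k}(G)`, which by
undistortion lies in a ball of `Z` of radius `O(k)`, of size `e^{o(k)}` by sub-exponential growth.
Hence `|B_k(G)| ≤ |B_k(G ⧸ Z)| · e^{o(k)}`, and the `k`-th roots of the two ball sizes have the same
limit. Generating sets of `G` project to generating sets of `G ⧸ Z`, and conversely a finite
generating set of `G ⧸ Z` (with `1` added, which does not change the balls) is the projection of a
lift of it together with generators of `Z`.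
-/

/-- The ball of radius `k` in a group `G` with respect to a (generating) set `S`:
elements expressible as a product of at most `k` elements of `S ∪ S⁻¹`. -/
def ball {G : Type*} [Group G] (S : Set G) (k : ℕ) : Set G :=
  {g | ∃ l : List G, l.length ≤ k ∧ (∀ x ∈ l, x ∈ S ∨ x⁻¹ ∈ S) ∧ l.prod = g}

/-- The set `ξ(G)` of exponential growth rates of `G`: real numbers `L` such that
`|B_k(G,S)|^{1/k} → L` for some finite generating set `S` of `G`. -/
noncomputable def growthRates (G : Type*) [Group G] : Set ℝ :=
  {L | ∃ S : Finset G, Subgroup.closure (S : Set G) = ⊤ ∧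
    Filter.Tendsto (fun k : ℕ => ((ball (S : Set G) k).ncard : ℝ) ^ (1 / (k : ℝ)))
      Filter.atTop (nhds L)}

/-- The word length `|g|_S`: the least `k` such that `g` lies in the ball of radius `k`. -/
noncomputable def wordLength {G : Type*} [Group G] (S : Set G) (g : G) : ℕ :=
  sInf {k | g ∈ ball S k}

/-- A finitely generated subgroup `Z ≤ G` is undistorted if, for some finite generating
sets `T` of `Z` and `S` of `G`, there is `C > 0` with `|h|_T ≤ C·(|h|_S + 1)` for all `h ∈ Z`. -/
def Undistorted {G : Type*} [Group G] (Z : Subgroup G) : Prop :=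
  ∃ T : Finset Z, Subgroup.closure (T : Set Z) = ⊤ ∧
    ∃ S : Finset G, Subgroup.closure (S : Set G) = ⊤ ∧
      ∃ C : ℝ, 0 < C ∧ ∀ h : Z,
        (wordLength (T : Set Z) h : ℝ) ≤ C * ((wordLength (S : Set G) (h : G) : ℝ) + 1)

/-- A group `Z` has sub-exponential growth if `|B_k(Z,T)|^{1/k} → 1` for some finite
generating set `T` of `Z`. -/
def SubExpGrowth (Z : Type*) [Group Z] : Prop :=
  ∃ T : Finset Z, Subgroup.closure (T : Set Z) = ⊤ ∧
    Filter.Tendsto (fun k : ℕ => ((ball (T : Set Z) k).ncard : ℝ) ^ (1 / (k : ℝ)))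
      Filter.atTop (nhds 1)

open Filter Topology
open scoped Finset Pointwise

lemma tendsto_rpow_one_div_comp_mul {a : ℕ → ℝ} (ha : ∀ j, 0 ≤ a j) {l : ℝ}
    (h : Tendsto (fun j : ℕ => a j ^ (1 / (j : ℝ))) atTop (𝓝 l)) {n : ℕ} (hn : 0 < n) :
    Tendsto (fun k : ℕ => a (n * k) ^ (1 / (k : ℝ))) atTop (𝓝 (l ^ n)) := by
  refine ((h.comp (tendsto_id.const_mul_atTop' hn)).pow n).congr' ?_
  filter_upwards [eventually_ge_atTop 1] with k hk
  have hk0 : (k : ℝ) ≠ 0 := by positivity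
  rw [Function.comp_apply, id, ← Real.rpow_natCast, ← Real.rpow_mul (ha _)]
  congr 1
  rw [Nat.cast_mul]
  field_simp

lemma tendsto_rpow_one_div_iff_of_le_of_le_mul {a b e : ℕ → ℝ} (hb : ∀ k, 0 ≤ b k)
    (hba : ∀ k, b k ≤ a k) (hab : ∀ k, a k ≤ b k * e k) (he : ∀ k, 0 < e k)
    (he1 : Tendsto (fun k : ℕ => e k ^ (1 / (k : ℝ))) atTop (𝓝 1)) {L : ℝ} :
    Tendsto (fun k : ℕ => b k ^ (1 / (k : ℝ))) atTop (𝓝 L) ↔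
      Tendsto (fun k : ℕ => a k ^ (1 / (k : ℝ))) atTop (𝓝 L) := by
  have hle (k : ℕ) : b k ^ (1 / (k : ℝ)) ≤ a k ^ (1 / (k : ℝ)) :=
    Real.rpow_le_rpow (hb k) (hba k) (by positivity)
  have hle_mul (k : ℕ) : a k ^ (1 / (k : ℝ)) ≤ b k ^ (1 / (k : ℝ)) * e k ^ (1 / (k : ℝ)) := by
    rw [← Real.mul_rpow (hb k) (he k).le]
    exact Real.rpow_le_rpow ((hb k).trans (hba k)) (hab k) (by positivity)
  constructor
  · intro hb'
    exact tendsto_of_tendsto_of_tendsto_of_le_of_le hb' (by simpa using hb'.mul he1) hle hle_mul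
  · intro ha'
    have hdiv : Tendsto (fun k : ℕ => a k ^ (1 / (k : ℝ)) / e k ^ (1 / (k : ℝ))) atTop (𝓝 L) :=
      div_one L ▸ ha'.div he1 one_ne_zero
    refine tendsto_of_tendsto_of_tendsto_of_le_of_le hdiv ha' (fun k => ?_) hle
    rw [div_le_iff₀ (Real.rpow_pos_of_pos (he k) _)]
    exact hle_mul k

namespace WordMetric

variable {G H : Type*} [Group G] [Group H]

lemma ball_zero (S : Set G) : ball S 0 = 1 := by
  ext g
  constructor
  · rintro ⟨l, hl, -, rfl⟩
    simp [List.length_eq_zero_iff.1 (Nat.le_zero.1 hl)]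
  · rintro rfl
    exact ⟨[], le_rfl, by simp, rfl⟩

lemma ball_succ (S : Set G) (k : ℕ) : ball S (k + 1) = insert 1 (S ∪ S⁻¹) * ball S k := by
  ext g
  constructor
  · rintro ⟨_ | ⟨x, l⟩, hl, hS, rfl⟩
    · exact ⟨1, Set.mem_insert _ _, 1, ⟨[], by simp, by simp, rfl⟩, one_mul _⟩
    · exact ⟨x, Or.inr (hS x List.mem_cons_self), l.prod,
        ⟨l, by simpa using hl, fun y hy => hS y (List.mem_cons_of_mem x hy), rfl⟩, rfl⟩
  · rintro ⟨x, hx, _, ⟨l, hl, hS, rfl⟩, rfl⟩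
    rcases hx with rfl | hx
    · exact ⟨l, hl.trans k.le_succ, hS, (one_mul _).symm⟩
    · exact ⟨x :: l, by simpa using hl, List.forall_mem_cons.2 ⟨hx, hS⟩, List.prod_cons⟩

lemma ball_eq_pow (S : Set G) (k : ℕ) : ball S k = insert 1 (S ∪ S⁻¹) ^ k := by
  induction k with
  | zero => rw [ball_zero, pow_zero]
  | succ k ih => rw [ball_succ, ih, pow_succ']

lemma one_mem_ball (S : Set G) (k : ℕ) : (1 : G) ∈ ball S k :=
  ⟨[], Nat.zero_le k, by simp, rfl⟩

lemma ball_mono (S : Set G) {j k : ℕ} (h : j ≤ k) : ball S j ⊆ ball S k := by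
  simpa only [ball_eq_pow] using Set.pow_subset_pow_right (Set.mem_insert _ _) h

lemma ball_add (S : Set G) (j k : ℕ) : ball S (j + k) = ball S j * ball S k := by
  simp only [ball_eq_pow, pow_add]

lemma ball_mul (S : Set G) (j k : ℕ) : ball S (j * k) = ball S j ^ k := by
  simp only [ball_eq_pow, pow_mul]

lemma inv_ball (S : Set G) (k : ℕ) : (ball S k)⁻¹ = ball S k := by
  simp only [ball_eq_pow, ← inv_pow, Set.inv_insert, inv_one, Set.union_inv, inv_inv,
    Set.union_comm]

lemma ball_insert_one (S : Set G) (k : ℕ) : ball (insert 1 S) k = ball S k := by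
  simp only [ball_eq_pow, Set.inv_insert, inv_one, Set.insert_union, Set.union_insert,
    Set.insert_idem]

lemma image_ball {F : Type*} [FunLike F G H] [MonoidHomClass F G H] (f : F) (S : Set G)
    (k : ℕ) :
    f '' ball S k = ball (f '' S) k := by
  simp only [ball_eq_pow, Set.image_pow, Set.image_insert_eq, Set.image_union, Set.image_inv,
    map_one]

lemma ball_eq_coe_pow [DecidableEq G] (S : Finset G) (k : ℕ) :
    ball (S : Set G) k = ↑(insert 1 (S ∪ S⁻¹) ^ k) := by
  simp [ball_eq_pow]

lemma ball_finite (S : Finset G) (k : ℕ) : (ball (S : Set G) k).Finite := by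
  classical
  rw [ball_eq_coe_pow]
  exact Finset.finite_toSet _

lemma ball_subset_ball_mul {S S' : Set G} {M : ℕ} (h : S ⊆ ball S' M) (k : ℕ) :
    ball S k ⊆ ball S' (M * k) := by
  have hinv : S⁻¹ ⊆ ball S' M := by
    rw [← inv_ball S' M]; exact Set.inv_subset_inv.2 h
  rw [ball_mul, ball_eq_pow S]
  gcongr
  exact Set.insert_subset (one_mem_ball _ _) (Set.union_subset h hinv)

lemma exists_mem_ball {S : Set G} (hS : Subgroup.closure S = ⊤) (g : G) : ∃ k, g ∈ ball S k := by
  have hg : g ∈ Subgroup.closure S := hS ▸ Subgroup.mem_top g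
  induction hg using Subgroup.closure_induction with
  | mem x hx => exact ⟨1, [x], le_rfl, by simpa using Or.inl hx, List.prod_singleton⟩
  | one => exact ⟨0, one_mem_ball S 0⟩
  | mul x y _ _ hx hy =>
    obtain ⟨j, hj⟩ := hx
    obtain ⟨k, hk⟩ := hy
    exact ⟨j + k, ball_add S j k ▸ Set.mul_mem_mul hj hk⟩
  | inv x _ hx =>
    obtain ⟨k, hk⟩ := hx
    exact ⟨k, inv_ball S k ▸ Set.inv_mem_inv.2 hk⟩

lemma exists_subset_ball (S : Finset G) {S' : Set G} (hS' : Subgroup.closure S' = ⊤) :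
    ∃ M, (S : Set G) ⊆ ball S' M := by
  choose f hf using exists_mem_ball hS'
  exact ⟨S.sup f, fun s hs => ball_mono S' (Finset.le_sup hs) (hf s)⟩

lemma wordLength_le_iff {S : Set G} (hS : Subgroup.closure S = ⊤) {g : G} {k : ℕ} :
    wordLength S g ≤ k ↔ g ∈ ball S k :=
  ⟨fun h => ball_mono S h (Nat.sInf_mem (exists_mem_ball hS g)), fun h => Nat.sInf_le h⟩

lemma _root_.Undistorted.exists_mem_ball_mul {Z : Subgroup G} (hZ : Undistorted Z) {T : Finset Z}
    (hT : Subgroup.closure (T : Set Z) = ⊤) (S : Finset G) :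
    ∃ N : ℕ, 0 < N ∧
      ∀ (k : ℕ) (h : Z), (h : G) ∈ ball (S : Set G) k → h ∈ ball (T : Set Z) (N * k) := by
  obtain ⟨T', hT', S', hS', C, hC0, hC⟩ := hZ
  obtain ⟨M, hM⟩ := exists_subset_ball S hS'
  obtain ⟨M', hM'⟩ := exists_subset_ball T' hT
  set c := ⌈C * (M + 1)⌉₊
  refine ⟨M' * c + 1, Nat.succ_pos _, fun k h hh => ?_⟩
  rcases Nat.eq_zero_or_pos k with rfl | hk
  · rw [ball_zero, Set.mem_one, OneMemClass.coe_eq_one] at hh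
    exact hh ▸ one_mem_ball _ _
  have hS'h : wordLength (S' : Set G) h ≤ M * k :=
    (wordLength_le_iff hS').2 (ball_subset_ball_mul hM k hh)
  have hT'h : wordLength (T' : Set Z) h ≤ c * k := by
    have hk1 : (1 : ℝ) ≤ k := by exact_mod_cast hk
    have : (wordLength (T' : Set Z) h : ℝ) ≤ c * k := calc
      _ ≤ C * (wordLength (S' : Set G) h + 1) := hC h
      _ ≤ C * (M * k + k) := by gcongr; exact_mod_cast hS'h
      _ = C * (M + 1) * k := by ring
      _ ≤ c * k := by gcongr; exact Nat.le_ceil _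
    exact_mod_cast this
  have := ball_subset_ball_mul hM' (c * k) ((wordLength_le_iff hT').1 hT'h)
  rw [← mul_assoc] at this
  exact ball_mono _ (by gcongr; omega) this

lemma ncard_ball_le_ncard_ball_image_mk_mul {Z : Subgroup G} [Z.Normal] (S : Finset G)
    (T : Finset Z) {k m : ℕ}
    (hm : ∀ h : Z, (h : G) ∈ ball (S : Set G) (2 * k) → h ∈ ball (T : Set Z) m) :
    (ball (S : Set G) k).ncard ≤
      (ball (QuotientGroup.mk' Z '' S) k).ncard * (ball (T : Set Z) m).ncard := by
  classical
  set A : Finset G := insert 1 (S ∪ S⁻¹) ^ k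
  have hA : (A : Set G) = ball S k := (ball_eq_coe_pow S k).symm
  have hAsymm : A⁻¹ = A := by rw [← Finset.coe_inj, Finset.coe_inv, hA, inv_ball]
  have hinter : #{x ∈ A ^ 2 | x ∈ Z} ≤ (ball (T : Set Z) m).ncard := by
    rw [← Set.ncard_coe_finset, ← Set.ncard_image_of_injective _ Subtype.val_injective]
    refine Set.ncard_le_ncard ?_ ((ball_finite T m).image _)
    intro x hx
    rw [Finset.coe_filter, Set.mem_ofPred_eq] at hx
    obtain ⟨hx2, hxZ⟩ := hx
    refine ⟨⟨x, hxZ⟩, hm ⟨x, hxZ⟩ ?_, rfl⟩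
    rwa [mul_comm, ball_mul, ← hA, ← Finset.coe_pow]
  calc (ball (S : Set G) k).ncard = #A := by rw [← hA, Set.ncard_coe_finset]
    _ ≤ #(A.image (QuotientGroup.mk' Z)) * #{x ∈ A ^ 2 | x ∈ Z} :=
      Finset.le_card_quotient_mul_sq_inter_subgroup hAsymm
    _ ≤ _ := by
      gcongr
      rw [← image_ball, ← hA, ← Finset.coe_image, Set.ncard_coe_finset]

lemma tendsto_ball_image_mk_iff {Z : Subgroup G} [Z.Normal] (S : Finset G) (T : Finset Z)
    (hZ : ∃ N : ℕ, 0 < N ∧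
      ∀ (k : ℕ) (h : Z), (h : G) ∈ ball (S : Set G) k → h ∈ ball (T : Set Z) (N * k))
    (hT : Tendsto (fun k : ℕ => ((ball (T : Set Z) k).ncard : ℝ) ^ (1 / (k : ℝ))) atTop (𝓝 1))
    (L : ℝ) :
    Tendsto (fun k : ℕ => ((ball (QuotientGroup.mk' Z '' S) k).ncard : ℝ) ^ (1 / (k : ℝ)))
        atTop (𝓝 L) ↔
      Tendsto (fun k : ℕ => ((ball (S : Set G) k).ncard : ℝ) ^ (1 / (k : ℝ))) atTop (𝓝 L) := by
  obtain ⟨N, hN, hZ⟩ := hZ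
  refine tendsto_rpow_one_div_iff_of_le_of_le_mul
    (e := fun k => ((ball (T : Set Z) (N * 2 * k)).ncard : ℝ))
    (fun k => by positivity) (fun k => ?_) (fun k => ?_) (fun k => ?_) ?_
  · rw [← image_ball]
    exact_mod_cast Set.ncard_image_le (ball_finite S k)
  · refine mod_cast ncard_ball_le_ncard_ball_image_mk_mul S T fun h hh => ?_
    rw [mul_assoc]
    exact hZ _ h hh
  · exact_mod_cast (Set.ncard_pos (ball_finite T _)).2 ⟨1, one_mem_ball _ _⟩
  · simpa using
      tendsto_rpow_one_div_comp_mul (fun j => Nat.cast_nonneg _) hT (by omega : 0 < N * 2)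

lemma exists_generating_finset_image_mk_eq_insert_one {Z : Subgroup G} [Z.Normal] {T : Finset Z}
    (hT : Subgroup.closure (T : Set Z) = ⊤) {Q : Finset (G ⧸ Z)}
    (hQ : Subgroup.closure (Q : Set (G ⧸ Z)) = ⊤) :
    ∃ S : Finset G, Subgroup.closure (S : Set G) = ⊤ ∧
      QuotientGroup.mk' Z '' S = insert 1 (Q : Set (G ⧸ Z)) := by
  classical
  set S : Finset G := insert 1 (Q.image Quotient.out ∪ T.image Subtype.val)
  have himage : QuotientGroup.mk' Z '' S = insert 1 (Q : Set (G ⧸ Z)) := by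
    refine Set.Subset.antisymm ?_ (Set.insert_subset ⟨1, by simp [S], map_one _⟩
      fun q hq => ⟨q.out, by simp [S, Finset.mem_coe.1 hq], QuotientGroup.out_eq' q⟩)
    rintro _ ⟨g, hg, rfl⟩
    simp only [S, Finset.coe_insert, Finset.coe_union, Finset.coe_image, Set.mem_insert_iff,
      Set.mem_union, Set.mem_image] at hg
    rcases hg with rfl | ⟨q, hq, rfl⟩ | ⟨t, -, rfl⟩
    · exact Or.inl (map_one _)
    · exact Or.inr (by simpa using hq)
    · exact Or.inl ((QuotientGroup.eq_one_iff _).2 t.2)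
  refine ⟨S, ?_, himage⟩
  have hZ : Z ≤ Subgroup.closure (S : Set G) := fun z hz => by
    have hmem := Subgroup.mem_map_of_mem Z.subtype (hT ▸ Subgroup.mem_top (⟨z, hz⟩ : Z))
    rw [MonoidHom.map_closure] at hmem
    refine Subgroup.closure_mono ?_ hmem
    rintro _ ⟨t, ht, rfl⟩
    simp [S, show t ∈ T from ht]
  rw [← Subgroup.comap_map_eq_self (H := Subgroup.closure (S : Set G))
      (by rwa [QuotientGroup.ker_mk' Z]), MonoidHom.map_closure, himage,
    Subgroup.closure_insert_one, hQ, Subgroup.comap_top]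

end WordMetric

theorem growthRates_quotient_eq_general (G : Type*) [Group G]
    (Z : Subgroup G) [Z.Normal]
    (hund : Undistorted Z) (hsub : SubExpGrowth Z) :
    growthRates (G ⧸ Z) = growthRates G := by
  classical
  obtain ⟨T, hT, hgrowth⟩ := hsub
  have htendsto_iff (S : Finset G) (L : ℝ) :=
    WordMetric.tendsto_ball_image_mk_iff S T (hund.exists_mem_ball_mul hT S) hgrowth L
  ext L
  constructor
  · rintro ⟨Q, hQ, hL⟩
    obtain ⟨S, hS, himage⟩ := WordMetric.exists_generating_finset_image_mk_eq_insert_one hT hQ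
    refine ⟨S, hS, (htendsto_iff S L).1 ?_⟩
    simpa only [himage, WordMetric.ball_insert_one] using hL
  · rintro ⟨S, hS, hL⟩
    refine ⟨S.image (QuotientGroup.mk' Z), ?_, ?_⟩
    · rw [Finset.coe_image, ← MonoidHom.map_closure, hS,
        Subgroup.map_top_of_surjective _ (QuotientGroup.mk'_surjective Z)]
    · simpa only [Finset.coe_image] using (htendsto_iff S L).2 hL

/-- Lemma: if `Z ⊴ G` is a finitely generated, undistorted normal subgroup of
sub-exponential growth in a finitely generated group `G`, then `ξ(G/Z) = ξ(G)`. -/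
theorem growthRates_quotient_eq (G : Type*) [Group G]
    (hG : ∃ S : Finset G, Subgroup.closure (S : Set G) = ⊤)
    (Z : Subgroup G) [Z.Normal]
    (hZfg : ∃ T : Finset Z, Subgroup.closure (T : Set Z) = ⊤)
    (hund : Undistorted Z) (hsub : SubExpGrowth Z) :
    growthRates (G ⧸ Z) = growthRates G :=
  growthRates_quotient_eq_general G Z hund hsub
end

section
/- Let φ be an automorphism of the free group F_n and let T be a non-trivial aperiodic φ-aligned tree. Then the action of G_φ on T is 4-acylindrical: the only element of G_φ fixing two vertices of T at distance at least 5 is the identity. -/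
/-- The mapping torus `G_φ ≤ Aut(F_n)`: the subgroup generated by the inner
automorphisms together with `φ`. -/
def Gphi (n : ℕ) (φ : MulAut (FreeGroup (Fin n))) : Subgroup (MulAut (FreeGroup (Fin n))) :=
  Subgroup.closure
    (Set.range (MulAut.conj : FreeGroup (Fin n) →* MulAut (FreeGroup (Fin n))) ∪ {φ})

/-- A `φ`-aligned tree: a bipartite tree with an action of `G_φ`, such that (1) only the
trivial inner automorphism fixes two distinct vertices of `V₀`, and (2) there is an
injective assignment of lifts of `φ` to vertices of `V₁`, each fixing the ball of radius
one around its vertex. -/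
structure PhiAlignedTree (n : ℕ) (φ : MulAut (FreeGroup (Fin n))) where
  V : Type
  T : SimpleGraph V
  isTree : T.IsTree
  act : Gphi n φ →* Equiv.Perm V
  act_adj : ∀ (g : Gphi n φ) (u v : V), T.Adj u v → T.Adj (act g u) (act g v)
  V0 : Set V
  V1 : Set V
  cover : V0 ∪ V1 = Set.univ
  disjoint : V0 ∩ V1 = ∅
  bipartite : ∀ u v : V, T.Adj u v → (u ∈ V0 ∧ v ∈ V1) ∨ (u ∈ V1 ∧ v ∈ V0)
  inner_trivial : ∀ w1 w2 : V, w1 ∈ V0 → w2 ∈ V0 → w1 ≠ w2 →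
    ∀ g : Gphi n φ, (∃ a : FreeGroup (Fin n),
        (g : MulAut (FreeGroup (Fin n))) = MulAut.conj a) →
      act g w1 = w1 → act g w2 = w2 → g = 1
  lift : V1 → Gphi n φ
  lift_inj : Function.Injective lift
  lift_is_lift : ∀ v : V1, ∃ a : FreeGroup (Fin n),
    ((lift v : Gphi n φ) : MulAut (FreeGroup (Fin n))) = MulAut.conj a * φ
  lift_fix : ∀ v : V1, act (lift v) (v : V) = (v : V)
  lift_fix_adj : ∀ (v : V1) (u : V), T.Adj (v : V) u → act (lift v) u = u

/-- A `φ`-aligned tree is aperiodic if lifts assigned to vertices of `V₁` having equal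
`k`-th powers (for some `k ≥ 1`) must be equal. -/
def PhiAlignedTree.Aperiodic {n : ℕ} {φ : MulAut (FreeGroup (Fin n))}
    (X : PhiAlignedTree n φ) : Prop :=
  ∀ v₀ v₁ : X.V1, (∃ k : ℕ, 1 ≤ k ∧ (X.lift v₀) ^ k = (X.lift v₁) ^ k) →
    X.lift v₀ = X.lift v₁

/-- A `φ`-aligned tree is non-trivial if the `G_φ`-action has no global fixed vertex. -/
def PhiAlignedTree.Nontrivial {n : ℕ} {φ : MulAut (FreeGroup (Fin n))}
    (X : PhiAlignedTree n φ) : Prop :=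
  ¬ ∃ v : X.V, ∀ g : Gphi n φ, X.act g v = v

/-! An element `g` fixing two vertices at distance `≥ 5` fixes the geodesic between them, which
contains a segment `w₀ y₁ w₁ y₂ w₂` with `wᵢ ∈ V₀`, `yᵢ ∈ V₁`. In `Out(F_n)` the class of `g`
is `φ ^ k`, so `g * φ_{y₁} ^ (-k)` is inner; it fixes `w₀` and `w₁`, hence is trivial. Thus
`g = φ_{y₁} ^ k = φ_{y₂} ^ k`, and for `k ≠ 0` aperiodicity would give `φ_{y₁} = φ_{y₂}`,
contradicting injectivity of `v ↦ φ_v`. So `k = 0` and `g = 1`. -/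

theorem MulAut.mul_conj_mul_inv {G : Type*} [Group G] (α : MulAut G) (b : G) :
    α * MulAut.conj b * α⁻¹ = MulAut.conj (α b) := by
  ext x
  simp [MulAut.conj_apply]

instance MulAut.conj_range_normal (G : Type*) [Group G] :
    (MulAut.conj : G →* MulAut G).range.Normal :=
  ⟨by rintro _ ⟨b, rfl⟩ α; exact ⟨α b, (MulAut.mul_conj_mul_inv α b).symm⟩⟩

abbrev Out (G : Type*) [Group G] : Type _ :=
  MulAut G ⧸ (MulAut.conj : G →* MulAut G).range

namespace Out

variable {G : Type*} [Group G]

abbrev mk : MulAut G →* Out G :=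
  QuotientGroup.mk' _

theorem mk_eq_one_iff {α : MulAut G} : mk α = 1 ↔ ∃ a : G, MulAut.conj a = α :=
  QuotientGroup.eq_one_iff α

theorem mk_conj_mul (a : G) (α : MulAut G) : mk (MulAut.conj a * α) = mk α := by
  rw [map_mul, mk_eq_one_iff.2 ⟨a, rfl⟩, one_mul]

theorem mk_mem_zpowers_of_mem_closure {φ α : MulAut G}
    (hα : α ∈ Subgroup.closure (Set.range MulAut.conj ∪ {φ})) :
    mk α ∈ Subgroup.zpowers (mk φ) := by
  suffices Subgroup.closure (Set.range MulAut.conj ∪ {φ}) ≤ (Subgroup.zpowers (mk φ)).comap mk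
    from this hα
  rw [Subgroup.closure_le]
  rintro _ (⟨a, rfl⟩ | rfl)
  · rw [SetLike.mem_coe, Subgroup.mem_comap, mk_eq_one_iff.2 ⟨a, rfl⟩]
    exact one_mem _
  · exact Subgroup.mem_zpowers _

end Out

theorem SimpleGraph.IsAcyclic.map_getVert_eq {V : Type*} {G : SimpleGraph V}
    (hG : G.IsAcyclic) (f : G →g G) (hf : Function.Injective f) {u v : V}
    (hu : f u = u) (hv : f v = v) {p : G.Walk u v} (hp : p.IsPath) (i : ℕ) :
    f (p.getVert i) = p.getVert i := by
  have hfp : ((p.map f).copy hu hv).IsPath := by simpa using hp.map hf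
  have := congrArg (fun q : G.Path u v ↦ q.1.getVert i)
    ((hG.subsingleton_path u v).elim ⟨_, hfp⟩ ⟨p, hp⟩)
  simpa [Walk.getVert_map] using this

namespace PhiAlignedTree

variable {n : ℕ} {φ : MulAut (FreeGroup (Fin n))} (X : PhiAlignedTree n φ)

def actHom (g : Gphi n φ) : X.T →g X.T :=
  ⟨X.act g, X.act_adj g _ _⟩

def stab (w : X.V) : Subgroup (Gphi n φ) :=
  (MulAction.stabilizer (Equiv.Perm X.V) w).comap X.act

theorem mem_stab {g : Gphi n φ} {w : X.V} : g ∈ X.stab w ↔ X.act g w = w :=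
  MulAction.mem_stabilizer_iff

theorem mem_V1_of_adj {u v : X.V} (huv : X.T.Adj u v) (hu : u ∈ X.V0) : v ∈ X.V1 := by
  rcases X.bipartite u v huv with ⟨_, hv⟩ | ⟨hu', _⟩
  · exact hv
  · exact (Set.eq_empty_iff_forall_notMem.1 X.disjoint u ⟨hu, hu'⟩).elim

theorem mem_V0_of_adj {u v : X.V} (huv : X.T.Adj u v) (hu : u ∈ X.V1) : v ∈ X.V0 := by
  rcases X.bipartite u v huv with ⟨hu', _⟩ | ⟨_, hv⟩
  · exact (Set.eq_empty_iff_forall_notMem.1 X.disjoint u ⟨hu', hu⟩).elim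
  · exact hv

theorem mk_lift (v : X.V1) : Out.mk (X.lift v : MulAut (FreeGroup (Fin n))) = Out.mk φ := by
  obtain ⟨a, ha⟩ := X.lift_is_lift v
  rw [ha, Out.mk_conj_mul]

theorem eq_lift_zpow_of_fixes_two_adj {g : Gphi n φ} {k : ℤ}
    (hk : Out.mk φ ^ k = Out.mk (g : MulAut (FreeGroup (Fin n)))) (v : X.V1) {w w' : X.V}
    (hw : w ∈ X.V0) (hw' : w' ∈ X.V0) (hne : w ≠ w') (hvw : X.T.Adj v w)
    (hvw' : X.T.Adj v w') (hgw : X.act g w = w) (hgw' : X.act g w' = w') :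
    g = X.lift v ^ k := by
  set c := g * (X.lift v ^ k)⁻¹
  have hc_inner : Out.mk (c : MulAut (FreeGroup (Fin n))) = 1 := by
    rw [Subgroup.coe_mul, Subgroup.coe_inv, Subgroup.coe_zpow, map_mul, map_inv, map_zpow,
      X.mk_lift, hk, mul_inv_cancel]
  obtain ⟨a, ha⟩ := Out.mk_eq_one_iff.1 hc_inner
  have hc_stab : ∀ x, X.T.Adj v x → X.act g x = x → c ∈ X.stab x := fun x hvx hgx ↦
    mul_mem (X.mem_stab.2 hgx)
      (inv_mem (zpow_mem (X.mem_stab.2 (X.lift_fix_adj v x hvx)) k))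
  have hc : c = 1 := X.inner_trivial w w' hw hw' hne c ⟨a, ha.symm⟩
    (X.mem_stab.1 (hc_stab w hvw hgw)) (X.mem_stab.1 (hc_stab w' hvw' hgw'))
  exact mul_inv_eq_one.1 hc

variable {X}

theorem Aperiodic.lift_eq_of_zpow_eq (hap : X.Aperiodic) {v₀ v₁ : X.V1} {k : ℤ} (hk : k ≠ 0)
    (h : X.lift v₀ ^ k = X.lift v₁ ^ k) : X.lift v₀ = X.lift v₁ := by
  refine hap v₀ v₁ ⟨k.natAbs, Int.natAbs_pos.2 hk, ?_⟩
  rcases Int.natAbs_eq k with hk' | hk'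
  · rwa [hk', zpow_natCast, zpow_natCast] at h
  · rwa [hk', zpow_neg, zpow_neg, inv_inj, zpow_natCast, zpow_natCast] at h

theorem eq_one_of_fixes_path (hap : X.Aperiodic) {g : Gphi n φ} {u v : X.V}
    {p : X.T.Walk u v} (hp : p.IsPath) {j : ℕ} (hj : j + 4 ≤ p.length)
    (hw₀ : p.getVert j ∈ X.V0) (hfix : ∀ i, X.act g (p.getVert i) = p.getVert i) :
    g = 1 := by
  obtain ⟨k, hk⟩ := Subgroup.mem_zpowers_iff.1 (Out.mk_mem_zpowers_of_mem_closure g.2)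
  have hadj (i : ℕ) (hi : i < 4) : X.T.Adj (p.getVert (j + i)) (p.getVert (j + i + 1)) :=
    p.adj_getVert_succ (by omega)
  have hne {i i' : ℕ} (h : i < i') (hi' : i' ≤ 4) :
      p.getVert (j + i) ≠ p.getVert (j + i') := fun heq ↦
    h.ne (by have := hp.getVert_injOn (by simp; omega) (by simp; omega) heq; omega)
  have hy₁ := X.mem_V1_of_adj (hadj 0 (by omega)) hw₀
  have hw₁ := X.mem_V0_of_adj (hadj 1 (by omega)) hy₁
  have hy₂ := X.mem_V1_of_adj (hadj 2 (by omega)) hw₁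
  have hw₂ := X.mem_V0_of_adj (hadj 3 (by omega)) hy₂
  have e₁ : g = X.lift ⟨_, hy₁⟩ ^ k := X.eq_lift_zpow_of_fixes_two_adj hk _ hw₀ hw₁
    (hne (i := 0) (i' := 2) (by omega) (by omega)) (hadj 0 (by omega)).symm (hadj 1 (by omega))
    (hfix _) (hfix _)
  have e₂ : g = X.lift ⟨_, hy₂⟩ ^ k := X.eq_lift_zpow_of_fixes_two_adj hk _ hw₁ hw₂
    (hne (i := 2) (i' := 4) (by omega) (by omega)) (hadj 2 (by omega)).symm (hadj 3 (by omega))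
    (hfix _) (hfix _)
  rcases eq_or_ne k 0 with rfl | hk0
  · simpa using e₁
  · have := X.lift_inj (hap.lift_eq_of_zpow_eq hk0 (e₁.symm.trans e₂))
    exact absurd (congrArg Subtype.val this) (hne (i := 1) (i' := 3) (by omega) (by omega))

end PhiAlignedTree

theorem alignedTree_four_acylindrical_general (n : ℕ) (φ : MulAut (FreeGroup (Fin n)))
    (X : PhiAlignedTree n φ) (hap : X.Aperiodic) :
    ∀ (g : Gphi n φ) (u v : X.V), 5 ≤ X.T.dist u v →
      X.act g u = u → X.act g v = v → g = 1 := by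
  intro g u v hdist hu hv
  obtain ⟨p, hp, hlen⟩ := X.isTree.connected.exists_path_of_dist u v
  have hfix := X.isTree.isAcyclic.map_getVert_eq (X.actHom g) (X.act g).injective hu hv hp
  have hu' : p.getVert 0 ∈ X.V0 ∪ X.V1 := X.cover ▸ Set.mem_univ _
  rcases hu' with hu₀ | hu₁
  · exact PhiAlignedTree.eq_one_of_fixes_path hap hp (by omega) hu₀ hfix
  · exact PhiAlignedTree.eq_one_of_fixes_path hap hp (j := 1) (by omega)
      (X.mem_V0_of_adj (p.adj_getVert_succ (by omega)) hu₁) hfix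

/-- Proposition: the action of `G_φ` on a non-trivial aperiodic `φ`-aligned tree is
4-acylindrical: the only element fixing two vertices at distance at least 5 is the
identity. -/
theorem alignedTree_four_acylindrical (n : ℕ) (φ : MulAut (FreeGroup (Fin n)))
    (X : PhiAlignedTree n φ) (hne : X.Nontrivial) (hap : X.Aperiodic) :
    ∀ (g : Gphi n φ) (u v : X.V), 5 ≤ X.T.dist u v →
      X.act g u = u → X.act g v = v → g = 1 :=
  alignedTree_four_acylindrical_general n φ X hap
end

section
/- Let φ be an automorphism of the free group F_n whose outer class is neat, i.e. for every a, x ∈ F_n and every k ≥ 1, if (ad_a ∘ φ)^k(x) = x then (ad_a ∘ φ)(x) = x. Suppose ψ₁ = ad_u ∘ φ and ψ₂ = ad_v ∘ φ (with u, v ∈ F_n) satisfy ψ₁^k = ψ₂^k for some integer k ≥ 1. Then ψ₁ = ψ₂. (This is the content of the statement that if φ represents a neat outer automorphism then every φ-aligned tree is aperiodic.) -/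
/-!
Write `conj u * φ = conj c * ψ` with `ψ = conj v * φ` and `c = u * v⁻¹`. In rank at most one the
free group is abelian, so inner automorphisms are trivial. Otherwise the centre is trivial
(a commutative subgroup of a free group is free by Nielsen–Schreier, hence cyclic, and a basis
element is not a proper power), so `conj` is injective. Since `conj c = (conj c * ψ) * ψ⁻¹`
commutes with `(conj c * ψ) ^ k = ψ ^ k`, we get `ψ ^ k c = c`, hence `ψ c = c` by neatness.
Then `conj c` commutes with `ψ`, so `conj (c ^ k) = 1`, and `c = 1` since free groups are
torsion-free.
-/

open Subgroup

theorem FreeGroup.isCyclic_of_subsingleton {α : Type*} [Subsingleton α] :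
    IsCyclic (FreeGroup α) := by
  cases isEmpty_or_nonempty α
  · infer_instance
  · have := uniqueOfSubsingleton (Classical.arbitrary α)
    infer_instance

namespace IsFreeGroup

variable {G : Type*} [Group G] [IsFreeGroup G] [IsMulCommutative G]

theorem subsingleton_generators : Subsingleton (Generators G) := by
  classical
  refine ⟨fun i j => by_contra fun hij => ?_⟩
  let f : G →* Equiv.Perm (Fin 3) :=
    lift fun x => if x = i then Equiv.swap 0 1 else if x = j then Equiv.swap 1 2 else 1
  have hf := congrArg f (mul_comm' (of i) (of j))
  simp only [map_mul, f, lift_of, ↓reduceIte, if_neg (Ne.symm hij)] at hf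
  exact absurd hf (by decide)

theorem isCyclic : IsCyclic G :=
  have := subsingleton_generators (G := G)
  (toFreeGroup G).isCyclic.mpr FreeGroup.isCyclic_of_subsingleton

end IsFreeGroup

namespace FreeGroup

variable {α : Type*}

def exponentSum [DecidableEq α] (i : α) : FreeGroup α →* Multiplicative ℤ :=
  lift (Pi.mulSingle i (Multiplicative.ofAdd 1))

@[simp]
theorem exponentSum_of_self [DecidableEq α] (i : α) : exponentSum i (of i) = .ofAdd 1 := by
  simp [exponentSum]

@[simp]
theorem exponentSum_of_of_ne [DecidableEq α] {i j : α} (h : j ≠ i) :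
    exponentSum i (of j) = 1 := by
  simp [exponentSum, h]

theorem isUnit_of_zpow_eq_of {t : FreeGroup α} {q : ℤ} {i : α} (h : t ^ q = of i) :
    IsUnit q := by
  classical
  have := congrArg (fun x => (exponentSum i x).toAdd) h
  simp only [map_zpow, toAdd_zpow, exponentSum_of_self, toAdd_ofAdd, smul_eq_mul] at this
  exact IsUnit.of_mul_eq_one _ this

theorem mem_zpowers_of_commute_of {w : FreeGroup α} {i : α} (hw : Commute w (of i)) :
    w ∈ zpowers (of i) := by
  set H := closure ({w, of i} : Set (FreeGroup α))
  have : IsMulCommutative H := isMulCommutative_closure <| by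
    rintro x (rfl | rfl) y (rfl | rfl)
    exacts [rfl, hw.eq, hw.symm.eq, rfl]
  obtain ⟨t, ht⟩ := H.isCyclic_iff_exists_zpowers_eq_top.mp IsFreeGroup.isCyclic
  have hwt : w ∈ zpowers t := ht ▸ subset_closure (by simp)
  obtain ⟨q, hq⟩ := mem_zpowers_iff.mp (ht ▸ subset_closure (by simp) : of i ∈ zpowers t)
  have hti : zpowers t = zpowers (of i) := by
    rcases Int.isUnit_iff.mp (isUnit_of_zpow_eq_of hq) with rfl | rfl
    · rw [← hq, zpow_one]
    · rw [← hq, zpow_neg_one, zpowers_inv]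
  exact hti ▸ hwt

theorem center_eq_bot [Nontrivial α] : center (FreeGroup α) = ⊥ := by
  classical
  obtain ⟨i, j, hij⟩ := exists_pair_ne α
  refine eq_bot_iff.mpr fun w hw => ?_
  obtain ⟨p, rfl⟩ :=
    mem_zpowers_iff.mp (mem_zpowers_of_commute_of (mem_center_iff.mp hw (of i)).symm)
  obtain ⟨q, hq⟩ :=
    mem_zpowers_iff.mp (mem_zpowers_of_commute_of (mem_center_iff.mp hw (of j)).symm)
  have hp : 0 = p := by
    simpa [hij.symm] using congrArg (fun x => (exponentSum i x).toAdd) hq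
  simp [← hp]

end FreeGroup

namespace MulAut

variable {G : Type*} [Group G]

theorem mul_conj (α : MulAut G) (c : G) : α * conj c = conj (α c) * α := by
  ext x
  simp [mul_assoc]

theorem conj_injective (hG : center G = ⊥) : Function.Injective (conj : G → MulAut G) := by
  refine (injective_iff_map_eq_one conj).mpr fun g hg => ?_
  rw [← mem_bot, ← hG, mem_center_iff]
  intro x
  exact (mul_inv_eq_iff_eq_mul.mp (by simpa using congrArg (· x) hg)).symm

theorem eq_one_of_conj_mul_pow_eq_pow [IsMulTorsionFree G] (hG : center G = ⊥) {β : MulAut G}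
    {c : G} {k : ℕ} (hk : k ≠ 0) (hβ : ∀ x, (β ^ k) x = x → β x = x)
    (h : (conj c * β) ^ k = β ^ k) : c = 1 := by
  have hpow : Commute (β ^ k) (conj c) := by
    have := (h ▸ (Commute.self_pow (conj c * β) k).symm).mul_right
      ((Commute.refl β).inv_right.pow_left k)
    rwa [mul_inv_cancel_right] at this
  have hβc : β c = c := by
    refine hβ c (conj_injective hG (mul_right_cancel (b := β ^ k) ?_))
    rw [← mul_conj, hpow.eq]
  have hcomm : Commute (conj c) β := by
    rw [Commute, SemiconjBy, mul_conj, hβc]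
  have hck : conj (c ^ k) = conj 1 := by
    rw [map_pow, map_one]
    simpa [hcomm.mul_pow] using h
  exact (pow_eq_one_iff_left hk).mp (conj_injective hG hck)

end MulAut

/-- Lemma: if the outer class of `φ` is neat, then lifts of `φ` with equal `k`-th powers
(for some `k ≥ 1`) are equal. -/
theorem neat_lift_powers_eq (n : ℕ) (φ : MulAut (FreeGroup (Fin n)))
    (hneat : ∀ (a x : FreeGroup (Fin n)) (k : ℕ), 1 ≤ k →
      ((MulAut.conj a * φ) ^ k) x = x → (MulAut.conj a * φ) x = x)
    (u v : FreeGroup (Fin n)) (k : ℕ) (hk : 1 ≤ k)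
    (h : (MulAut.conj u * φ) ^ k = (MulAut.conj v * φ) ^ k) :
    MulAut.conj u * φ = MulAut.conj v * φ := by
  rcases subsingleton_or_nontrivial (Fin n) with _ | _
  · have := FreeGroup.isCyclic_of_subsingleton (α := Fin n)
    have hconj (a : FreeGroup (Fin n)) : MulAut.conj a = 1 := by
      ext x
      simp [mul_comm' a x]
    rw [hconj u, hconj v]
  · suffices u * v⁻¹ = 1 by rw [mul_inv_eq_one.mp this]
    refine MulAut.eq_one_of_conj_mul_pow_eq_pow FreeGroup.center_eq_bot (by omega)
      (hneat v · k hk) ?_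
    rwa [← mul_assoc, ← map_mul, inv_mul_cancel_right]
end

section
/- Let φ be an automorphism of the free group F_n. Then φ has polynomial growth of degree 0 — that is, for every g ∈ F_n there exists B such that |φ^k(g)‾| ≤ B for all k ≥ 1 — if and only if φ has finite order in Out(F_n), i.e. φ^k = ad_a for some integer k ≥ 1 and some a ∈ F_n. -/
/-- The minimal word length of a conjugate of `g` in a free group (cyclically reduced length). -/
noncomputable def cycNorm {n : ℕ} (g : FreeGroup (Fin n)) : ℕ :=
  sInf {m | ∃ a : FreeGroup (Fin n), (a * g * a⁻¹).norm = m}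

/-- An automorphism `φ` of `F_n` is polynomially growing of degree at most `d` if for
every `g` there is `B > 0` with `|φ^k(g)‾| ≤ B·k^d` for all `k ≥ 1`. -/
def PolyGrowthDegLE {n : ℕ} (φ : MulAut (FreeGroup (Fin n))) (d : ℕ) : Prop :=
  ∀ g : FreeGroup (Fin n), ∃ B : ℝ, 0 < B ∧
    ∀ k : ℕ, 1 ≤ k → (cycNorm ((φ ^ k) g) : ℝ) ≤ B * (k : ℝ) ^ d

/-!
If every conjugacy class has a bounded `φ`-orbit, each orbit is finite, because there are only
finitely many conjugacy classes of bounded cyclic length; so a single power `θ = φ^d` fixes the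
conjugacy classes of all generators `xᵢ` and all products `xᵢxⱼ`. After composing with an inner
automorphism, `θ` fixes `x₀` and sends each `xᵢ` to `cᵢxᵢcᵢ⁻¹`. Then `x₀cᵢxᵢcᵢ⁻¹` is conjugate to
`x₀xᵢ`, which has cyclic length `2`. Stripping letters `x₀^±1` from the front and `xᵢ^±1` from the
back of `cᵢ` does not change this conjugacy class; if something nonempty `c` remained, `x₀cxᵢc⁻¹`
would be cyclically reduced of length at least `4`. Hence `cᵢ = x₀^sᵢ xᵢ^tᵢ`. The same argument applied to `xᵢxⱼ` forces all `sᵢ` to agree, and `θ` is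
conjugation by `x₀^s`. Conversely, if `φ^k` is inner, the orbit of a conjugacy class has at most `k`
elements.
-/

open FreeGroup

section ConjClassStabilizer

variable {G : Type*} [Group G]

def conjClassStabilizer (g : G) : Subgroup (MulAut G) where
  carrier := {ψ | IsConj (ψ g) g}
  one_mem' := IsConj.refl g
  mul_mem' {ψ χ} hψ hχ := (ψ.toMonoidHom.map_isConj hχ).trans hψ
  inv_mem' {ψ} hψ := by
    simpa using (ψ⁻¹.toMonoidHom.map_isConj hψ).symm

@[simp]
theorem mem_conjClassStabilizer {g : G} {ψ : MulAut G} :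
    ψ ∈ conjClassStabilizer g ↔ IsConj (ψ g) g :=
  Iff.rfl

theorem conj_mem_conjClassStabilizer (c g : G) : MulAut.conj c ∈ conjClassStabilizer g :=
  (isConj_iff.2 ⟨c, rfl⟩).symm

end ConjClassStabilizer

namespace FreeGroup

variable {α : Type*}

theorem exists_mk_singleton_eq_zpow (p : α × Bool) : ∃ e : ℤ, mk [p] = of p.1 ^ e := by
  obtain ⟨x, _ | _⟩ := p
  · exact ⟨-1, by rw [zpow_neg_one, of, inv_mk]; rfl⟩
  · exact ⟨1, by rw [zpow_one]; rfl⟩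

theorem IsReduced.invRev {L : List (α × Bool)} (h : IsReduced L) : IsReduced (invRev L) := by
  rw [IsReduced, FreeGroup.invRev, List.isChain_reverse, List.isChain_map]
  exact h.imp fun x y hxy hyx => by simpa [eq_comm] using hxy hyx.symm

theorem head?_invRev (L : List (α × Bool)) :
    (invRev L).head? = L.getLast?.map fun q => (q.1, !q.2) := by
  simp [FreeGroup.invRev, List.head?_reverse, List.getLast?_map]

theorem getLast?_invRev (L : List (α × Bool)) :
    (invRev L).getLast? = L.head?.map fun q => (q.1, !q.2) := by
  simp [FreeGroup.invRev, List.getLast?_reverse, List.head?_map]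

theorem isCyclicallyReduced_cons_append_cons_invRev {a b : α} {T : List (α × Bool)}
    (hT : IsReduced T) (ha : ∀ p ∈ T.head?, p.1 ≠ a) (hb : ∀ q ∈ T.getLast?, q.1 ≠ b) :
    IsCyclicallyReduced ((a, true) :: T ++ (b, true) :: invRev T) := by
  refine ⟨?_, fun x hx y hy hxy => ?_⟩
  · rw [IsReduced, List.cons_append, List.isChain_cons, List.isChain_append, List.isChain_cons]
    refine ⟨?_, hT, ⟨?_, hT.invRev⟩, ?_⟩
    · rcases T with _ | ⟨p, L⟩
      · simp
      · rintro y ⟨⟩ h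
        exact absurd h.symm (ha p rfl)
    · intro y hy h
      obtain ⟨q, hq, rfl⟩ := Option.mem_map.1 (head?_invRev T ▸ hy)
      exact absurd h.symm (hb q hq)
    · rintro x hx y ⟨⟩ h
      rcases T.eq_nil_or_concat' with rfl | ⟨L, q, rfl⟩
      · cases hx
      · simp only [List.getLast?_concat] at hx
        cases hx
        exact absurd h (hb x (by simp))
  · rcases T with _ | ⟨p, L⟩
    · simp at hx hy
      rw [← hx, ← hy]
    · have hlast : ((a, true) :: p :: L ++ (b, true) :: invRev (p :: L)).getLast? =
          some (p.1, !p.2) := by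
        rw [← List.singleton_append (l := invRev _), ← List.append_assoc,
          List.getLast?_append_of_ne_nil _ (by simp [FreeGroup.invRev]), getLast?_invRev]
        rfl
      rw [hlast, Option.mem_some_iff] at hx
      cases hx; cases hy
      exact absurd hxy (ha p rfl)

theorem eq_zero_of_of_zpow_eq {u i j : α} (hi : i ≠ u) (hj : j ≠ u) {c s t : ℤ}
    (h : of u ^ c = of i ^ s * of j ^ t) : c = 0 := by
  classical
  let count : FreeGroup α →* Multiplicative ℤ :=
    FreeGroup.lift fun x => if x = u then Multiplicative.ofAdd 1 else 1
  simpa [count, hi, hj] using congrArg count h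

theorem mulAut_ext {θ₁ θ₂ : MulAut (FreeGroup α)} (h : ∀ i, θ₁ (of i) = θ₂ (of i)) : θ₁ = θ₂ :=
  MulEquiv.toMonoidHom_injective (ext_hom _ _ h)

variable [DecidableEq α]

theorem IsReduced.norm_mk {L : List (α × Bool)} (h : IsReduced L) : (mk L).norm = L.length := by
  rw [norm, toWord_mk, h.reduce_eq]

theorem norm_pow_le (x : FreeGroup α) (m : ℕ) : (x ^ m).norm ≤ m * x.norm := by
  induction m with
  | zero => simp
  | succ m ih =>
    rw [pow_succ, add_mul, one_mul]
    exact (norm_mul_le _ _).trans (by omega)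

theorem IsCyclicallyReduced.norm_mk_pow {L : List (α × Bool)} (h : IsCyclicallyReduced L)
    (m : ℕ) : (mk L ^ m).norm = m * L.length := by
  rw [pow_mk, (h.flatten_replicate m).isReduced.norm_mk]
  simp

/-- `(mk L) ^ m` has norm `m * L.length`, while the `m`-th power of a conjugate `g` has norm at
most `m * g.norm` plus twice the norm of the conjugator. -/
theorem IsCyclicallyReduced.length_le_norm_of_isConj {L : List (α × Bool)}
    (h : IsCyclicallyReduced L) {g : FreeGroup α} (hg : IsConj (mk L) g) :
    L.length ≤ g.norm := by
  obtain ⟨c, rfl⟩ := isConj_iff.1 hg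
  have key (m : ℕ) : m * L.length ≤ 2 * c.norm + m * (c * mk L * c⁻¹).norm :=
    calc m * L.length = (c⁻¹ * (c * mk L * c⁻¹) ^ m * c).norm := by
          rw [← h.norm_mk_pow m, conj_pow]; group
      _ ≤ c⁻¹.norm + ((c * mk L * c⁻¹) ^ m).norm + c.norm :=
          (norm_mul_le _ _).trans (Nat.add_le_add_right (norm_mul_le _ _) _)
      _ ≤ 2 * c.norm + m * (c * mk L * c⁻¹).norm := by
          have := norm_pow_le (c * mk L * c⁻¹) m
          rw [norm_inv_eq]; omega
  by_contra! hlt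
  nlinarith [key (2 * c.norm + 1)]

theorem not_isConj_of_head_ne_of_getLast_ne {a b : α} {T : List (α × Bool)} (hT : IsReduced T)
    (hne : T ≠ []) (ha : ∀ p ∈ T.head?, p.1 ≠ a) (hb : ∀ q ∈ T.getLast?, q.1 ≠ b) :
    ¬IsConj (of a * mk T * of b * (mk T)⁻¹) (of a * of b) := by
  intro h
  have hmk : mk ((a, true) :: T ++ (b, true) :: invRev T) = of a * mk T * of b * (mk T)⁻¹ := by
    simp only [of, inv_mk, mul_mk, List.cons_append, List.nil_append, List.append_assoc]
  have hlen := (isCyclicallyReduced_cons_append_cons_invRev hT ha hb).length_le_norm_of_isConj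
    (hmk ▸ h)
  have hnorm : (of a * of b).norm ≤ 2 := (norm_mul_le _ _).trans (by simp [norm_of])
  have hpos := List.length_pos_of_ne_nil hne
  simp only [List.length_append, List.length_cons, invRev_length] at hlen
  omega

theorem exists_eq_zpow_mul_zpow_of_isReduced {a b : α} (T : List (α × Bool))
    (hT : IsReduced T) (h : IsConj (of a * mk T * of b * (mk T)⁻¹) (of a * of b)) :
    ∃ s t : ℤ, mk T = of a ^ s * of b ^ t := by
  induction hn : T.length using Nat.strong_induction_on generalizing T with | _ N ih
  rcases T with _ | ⟨p, T'⟩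
  · exact ⟨0, 0, by rw [zpow_zero, zpow_zero, mul_one]; rfl⟩
  by_cases hp : p.1 = a
  · obtain ⟨e, he⟩ := exists_mk_singleton_eq_zpow p
    have hmk : mk (p :: T') = of a ^ e * mk T' := by rw [← hp, ← he, mul_mk]; rfl
    have h' : IsConj (of a * mk T' * of b * (mk T')⁻¹) (of a * of b) := by
      refine (isConj_iff.2 ⟨of a ^ e, ?_⟩).trans (hmk ▸ h)
      group
    obtain ⟨s, t, hst⟩ := ih _ (by simp [← hn]) T' (hT.infix ⟨[p], [], by simp⟩) h' rfl
    exact ⟨e + s, t, by rw [hmk, hst, zpow_add, mul_assoc]⟩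
  obtain ⟨T'', q, hT''⟩ := (List.eq_nil_or_concat' (p :: T')).resolve_left (List.cons_ne_nil _ _)
  by_cases hq : q.1 = b
  · obtain ⟨e, he⟩ := exists_mk_singleton_eq_zpow q
    have hmk : mk (p :: T') = mk T'' * of b ^ e := by rw [hT'', ← hq, ← he, mul_mk]
    have h' : IsConj (of a * mk T'' * of b * (mk T'')⁻¹) (of a * of b) := by
      convert h using 1
      rw [hmk]
      group
    obtain ⟨s, t, hst⟩ := ih _ (by simp [← hn, hT'']) T''
      (hT''.symm ▸ hT |>.infix ⟨[], [q], rfl⟩) h' rfl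
    exact ⟨s, t + e, by rw [hmk, hst, zpow_add, mul_assoc]⟩
  exact absurd h (not_isConj_of_head_ne_of_getLast_ne hT (List.cons_ne_nil _ _)
    (by simpa using hp) (by rw [hT'']; simpa using hq))

theorem exists_eq_zpow_mul_zpow_of_isConj {a b : α} {w : FreeGroup α}
    (h : IsConj (of a * w * of b * w⁻¹) (of a * of b)) : ∃ s t : ℤ, w = of a ^ s * of b ^ t := by
  rw [← mk_toWord (x := w)] at h ⊢
  exact exists_eq_zpow_mul_zpow_of_isReduced _ isReduced_toWord h

theorem exists_eq_conj_zpow_of_isConj {u i : α} {y : FreeGroup α} (h : IsConj y (of i))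
    (hu : IsConj (of u * y) (of u * of i)) : ∃ s : ℤ, y = of u ^ s * of i * (of u ^ s)⁻¹ := by
  obtain ⟨c, rfl⟩ := isConj_iff.1 h.symm
  obtain ⟨s, t, rfl⟩ := exists_eq_zpow_mul_zpow_of_isConj (by simpa only [mul_assoc] using hu)
  exact ⟨s, by group⟩

theorem eq_of_isConj_conj_zpow_mul {u i j : α} (hi : i ≠ u) (hj : j ≠ u) {s t : ℤ}
    (h : IsConj (of u ^ s * of i * (of u ^ s)⁻¹ * (of u ^ t * of j * (of u ^ t)⁻¹))
      (of i * of j)) : s = t := by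
  have h' : IsConj (of i * of u ^ (t - s) * of j * (of u ^ (t - s))⁻¹) (of i * of j) :=
    (isConj_iff.2 ⟨of u ^ s, by group⟩).trans h
  obtain ⟨p, q, hpq⟩ := exists_eq_zpow_mul_zpow_of_isConj h'
  have := eq_zero_of_of_zpow_eq hi hj hpq
  omega

theorem exists_eq_conj_zpow_of_fixed {θ : MulAut (FreeGroup α)} {u : α}
    (hu : θ (of u) = of u) (h₁ : ∀ i, θ ∈ conjClassStabilizer (of i))
    (h₂ : ∀ i j, i ≠ j → θ ∈ conjClassStabilizer (of i * of j)) :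
    ∃ s : ℤ, θ = MulAut.conj (of u ^ s) := by
  have hconj (i : α) : ∃ s : ℤ, θ (of i) = of u ^ s * of i * (of u ^ s)⁻¹ := by
    by_cases hi : i = u
    · exact ⟨0, by simp [hi, hu]⟩
    exact exists_eq_conj_zpow_of_isConj (h₁ i) (by simpa [hu] using h₂ u i (Ne.symm hi))
  choose S hS using hconj
  by_cases hex : ∃ i, i ≠ u
  · obtain ⟨i, hi⟩ := hex
    refine ⟨S i, mulAut_ext fun j => ?_⟩
    rw [MulAut.conj_apply]
    by_cases hj : j = u
    · subst hj; rw [hu]; group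
    have hji : S j = S i := by
      by_cases hij : j = i
      · rw [hij]
      exact eq_of_isConj_conj_zpow_mul hj hi (by simpa [hS] using h₂ j i hij)
    rw [hS j, hji]
  · simp only [ne_eq, not_exists, not_not] at hex
    exact ⟨0, mulAut_ext fun j => by simp [hex j, hu]⟩

theorem exists_eq_conj_of_forall_mem_conjClassStabilizer (θ : MulAut (FreeGroup α))
    (h₁ : ∀ i, θ ∈ conjClassStabilizer (of i))
    (h₂ : ∀ i j, i ≠ j → θ ∈ conjClassStabilizer (of i * of j)) :
    ∃ a, θ = MulAut.conj a := by
  cases isEmpty_or_nonempty α with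
  | inl _ => exact ⟨1, mulAut_ext isEmptyElim⟩
  | inr hα =>
    obtain ⟨u⟩ := hα
    obtain ⟨c, hc⟩ := isConj_iff.1 (h₁ u)
    have hmem (g : FreeGroup α) (hg : θ ∈ conjClassStabilizer g) :
        MulAut.conj c * θ ∈ conjClassStabilizer g :=
      mul_mem (conj_mem_conjClassStabilizer c g) hg
    obtain ⟨s, hs⟩ := exists_eq_conj_zpow_of_fixed (θ := MulAut.conj c * θ) (u := u) hc
      (fun i => hmem _ (h₁ i)) (fun i j hij => hmem _ (h₂ i j hij))
    refine ⟨c⁻¹ * of u ^ s, ?_⟩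
    rw [_root_.map_mul, _root_.map_inv, ← hs]
    group

end FreeGroup

theorem Submonoid.exists_pow_mem_of_forall {M ι : Type*} [Monoid M] [Fintype ι]
    (S : ι → Submonoid M) (x : M) (h : ∀ i, ∃ d, 0 < d ∧ x ^ d ∈ S i) :
    ∃ d, 0 < d ∧ ∀ i, x ^ d ∈ S i := by
  choose d hd hx using h
  refine ⟨∏ i, d i, Finset.prod_pos fun i _ => hd i, fun i => ?_⟩
  obtain ⟨m, hm⟩ := Finset.dvd_prod_of_mem d (Finset.mem_univ i)
  rw [hm, pow_mul]
  exact pow_mem (hx i) m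

theorem FreeGroup.finite_setOf_norm_le {α : Type*} [DecidableEq α] [Finite α] (B : ℕ) :
    {x : FreeGroup α | x.norm ≤ B}.Finite :=
  (List.finite_length_le (α × Bool) B).preimage toWord_injective.injOn

section CycNorm

variable {n : ℕ}

theorem exists_norm_conj_eq_cycNorm (g : FreeGroup (Fin n)) :
    ∃ z : FreeGroup (Fin n), (z * g * z⁻¹).norm = cycNorm g :=
  Nat.sInf_mem (s := {m | ∃ a : FreeGroup (Fin n), (a * g * a⁻¹).norm = m}) ⟨g.norm, 1, by simp⟩

theorem cycNorm_conj (c g : FreeGroup (Fin n)) : cycNorm (c * g * c⁻¹) = cycNorm g := by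
  unfold cycNorm
  congr 1
  ext m
  constructor
  · rintro ⟨z, rfl⟩
    exact ⟨z * c, by group⟩
  · rintro ⟨z, rfl⟩
    exact ⟨z * c⁻¹, by group⟩

theorem exists_pow_mem_conjClassStabilizer (φ : MulAut (FreeGroup (Fin n)))
    (g : FreeGroup (Fin n)) {B : ℕ} (hB : ∀ k, 1 ≤ k → cycNorm ((φ ^ k) g) ≤ B) :
    ∃ d, 0 < d ∧ φ ^ d ∈ conjClassStabilizer g := by
  have hmem (k : ℕ) : ConjClasses.mk ((φ ^ (k + 1)) g) ∈
      ConjClasses.mk '' {x : FreeGroup (Fin n) | x.norm ≤ B} := by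
    obtain ⟨z, hz⟩ := exists_norm_conj_eq_cycNorm ((φ ^ (k + 1)) g)
    exact ⟨_, (hz.trans_le (hB (k + 1) (by omega)) : _),
      ConjClasses.mk_eq_mk_iff_isConj.2 (isConj_iff.2 ⟨z, rfl⟩).symm⟩
  obtain ⟨k, l, hkl, hf⟩ := Set.Finite.exists_lt_map_eq_of_forall_mem hmem
    ((finite_setOf_norm_le B).image _)
  refine ⟨l - k, by omega, ?_⟩
  have hsplit : φ ^ (l + 1) = φ ^ (k + 1) * φ ^ (l - k) := by rw [← pow_add]; congr 1; omega
  rw [ConjClasses.mk_eq_mk_iff_isConj, hsplit, MulAut.mul_apply] at hf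
  simpa using ((φ ^ (k + 1))⁻¹.toMonoidHom.map_isConj hf).symm

theorem exists_cycNorm_le_of_pow_eq_conj {φ : MulAut (FreeGroup (Fin n))} {k : ℕ} (hk : 0 < k)
    {a : FreeGroup (Fin n)} (ha : φ ^ k = MulAut.conj a) (g : FreeGroup (Fin n)) :
    ∃ B, ∀ m, cycNorm ((φ ^ m) g) ≤ B := by
  refine ⟨(Finset.range k).sup fun r => cycNorm ((φ ^ r) g), fun m => ?_⟩
  have hsplit : (φ ^ m) g = a ^ (m / k) * (φ ^ (m % k)) g * (a ^ (m / k))⁻¹ := by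
    conv_lhs => rw [← Nat.div_add_mod m k, pow_add, pow_mul, ha, ← map_pow]
    rfl
  rw [hsplit, cycNorm_conj]
  exact Finset.le_sup (f := fun r => cycNorm ((φ ^ r) g)) (Finset.mem_range.2 (Nat.mod_lt m hk))

end CycNorm

/-- Lemma: `φ` has polynomial growth of degree 0 (bounded growth of every conjugacy
class) iff `φ` has finite order in `Out(F_n)`, i.e. some positive power of `φ` is inner. -/
theorem degZero_iff_finiteOrder_out (n : ℕ) (φ : MulAut (FreeGroup (Fin n))) :
    (∀ g : FreeGroup (Fin n), ∃ B : ℕ, ∀ k : ℕ, 1 ≤ k → cycNorm ((φ ^ k) g) ≤ B) ↔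
      (∃ k : ℕ, 1 ≤ k ∧ ∃ a : FreeGroup (Fin n), φ ^ k = MulAut.conj a) := by
  constructor
  · intro H
    let testWords : Fin n ⊕ Fin n × Fin n → FreeGroup (Fin n) :=
      Sum.elim of fun p => of p.1 * of p.2
    obtain ⟨d, hd, hφd⟩ := Submonoid.exists_pow_mem_of_forall
      (fun x => (conjClassStabilizer (testWords x)).toSubmonoid) φ
      fun x => exists_pow_mem_conjClassStabilizer φ _ (H (testWords x)).choose_spec
    obtain ⟨a, ha⟩ := exists_eq_conj_of_forall_mem_conjClassStabilizer (φ ^ d)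
      (fun i => hφd (.inl i)) (fun i j _ => hφd (.inr (i, j)))
    exact ⟨d, hd, a, ha⟩
  · rintro ⟨k, hk, a, ha⟩ g
    obtain ⟨B, hB⟩ := exists_cycNorm_le_of_pow_eq_conj hk ha g
    exact ⟨B, fun m _ => hB m⟩
end

section
/- Let N = F_n be a finitely generated free group and let P ≤ N be a finitely generated subgroup. Then P, regarded as a subset of N, is quasi-algebraic in N. -/
/-!
Free groups are linear: ping-pong embeds `F(ℕ)` into `GL₂(ℚ)` through conjugates of a parabolic
matrix (Sanov), and `GLₙ` over a Noetherian ring is equationally Noetherian by Hilbert's basis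
theorem, since the entries of a word in generic matrices are polynomials. Hence every system of
equations over a free group of countable rank is equivalent to a finite subsystem.

For `P = ⟨gens⟩`, let `C` be the finite set of cosets of `P` visited when reading the generators
from the base coset. Completing the partial action of each letter on `C` to a permutation
(M. Hall) and recording Schreier cocycle values gives a homomorphism `Φ : F → P ≀ Sym(C)` with
`g ∈ P ↔ Φ(g)_{c₀} = g`. Once the permutation parts of the `Φ(gᵢ)` are fixed (finitely many
choices), both sides are words in the `gᵢ` and the coordinates of the `Φ(gᵢ)`, so `s(g) ∈ P`
becomes one equation over `F`; the finite subsystems of the finitely many fibres combine.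
-/

def HasFiniteSubsystems {E X : Type*} (Z : E → Set X) : Prop :=
  ∀ S : Set E, ∃ S₀ : Finset E, ↑S₀ ⊆ S ∧ ⋂ s ∈ S₀, Z s ⊆ ⋂ s ∈ S, Z s

namespace HasFiniteSubsystems

variable {E E' X Y : Type*} {Z : E → Set X}

theorem comp (hZ : HasFiniteSubsystems Z) (u : E' → E) : HasFiniteSubsystems (Z ∘ u) := by
  classical
  intro S
  obtain ⟨T, hTS, hT⟩ := hZ (u '' S)
  obtain ⟨S₀, hS₀S, rfl⟩ := Finset.subset_set_image_iff.mp hTS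
  refine ⟨S₀, hS₀S, ?_⟩
  simpa only [Finset.set_biInter_finset_image, Set.biInter_image, Function.comp_apply] using hT

theorem preimage (hZ : HasFiniteSubsystems Z) (f : Y → X) :
    HasFiniteSubsystems fun s => f ⁻¹' Z s := by
  intro S
  obtain ⟨S₀, hS₀S, hS₀⟩ := hZ S
  refine ⟨S₀, hS₀S, ?_⟩
  simpa only [Set.preimage_iInter₂] using Set.preimage_mono hS₀

theorem of_fibers {Q : Type*} [Finite Q] (π : X → Q)
    (h : ∀ q, HasFiniteSubsystems fun s => {x : π ⁻¹' {q} | ↑x ∈ Z s}) :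
    HasFiniteSubsystems Z := by
  classical
  have := Fintype.ofFinite Q
  intro S
  choose T hTS hT using fun q => h q S
  refine ⟨Finset.univ.biUnion T, by simpa using hTS, fun x hx => ?_⟩
  simp only [Finset.mem_biUnion, Finset.mem_univ, true_and, Set.mem_iInter] at hx
  have := @hT (π x) ⟨x, rfl⟩ (by simpa using fun s hs => hx s ⟨π x, hs⟩)
  simpa using this

end HasFiniteSubsystems

theorem hasFiniteSubsystems_Ici {α : Type*} [CompleteLattice α] [WellFoundedGT α] :
    HasFiniteSubsystems (Set.Ici : α → Set α) := by
  intro S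
  obtain ⟨T, hTS, hT⟩ := CompleteLattice.WellFoundedGT.isSupFiniteCompact α S
  refine ⟨T, hTS, fun b hb => ?_⟩
  simp only [Set.mem_iInter, Set.mem_Ici] at hb ⊢
  exact fun s hs => (le_sSup hs).trans (hT ▸ Finset.sup_le hb)

theorem quasiAlgebraic_of_hasFiniteSubsystems {G : Type*} [Group G] {A : Set G}
    (h : ∀ m, HasFiniteSubsystems fun s : FreeGroup (Fin m) =>
      {g : Fin m → G | FreeGroup.lift g s ∈ A}) :
    QuasiAlgebraic G A := by
  intro m _ S
  obtain ⟨S₀, hS₀S, hS₀⟩ := h m S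
  have hV (T : Set (FreeGroup (Fin m))) :
      eqnSolutions A T = ⋂ s ∈ T, {g | FreeGroup.lift g s ∈ A} := by
    ext; simp [eqnSolutions]
  refine ⟨S₀, hS₀S, ?_⟩
  rw [hV, hV]
  exact hS₀.antisymm (Set.biInter_subset_biInter_left hS₀S)

theorem hasFiniteSubsystems_lift_eq_one_of_injective {G H ι : Type*} [Group G] [Group H]
    {φ : G →* H} (hφ : Function.Injective φ)
    (hH : HasFiniteSubsystems fun s : FreeGroup ι => {h : ι → H | FreeGroup.lift h s = 1}) :
    HasFiniteSubsystems fun s : FreeGroup ι => {g : ι → G | FreeGroup.lift g s = 1} := by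
  convert hH.preimage (φ ∘ ·) using 1
  ext s g
  change FreeGroup.lift g s = 1 ↔ FreeGroup.lift (φ ∘ g) s = 1
  rw [← FreeGroup.lift_unique (φ.comp (FreeGroup.lift g)) (by simp), MonoidHom.comp_apply,
    map_eq_one_iff φ hφ]

namespace Matrix.GeneralLinearGroup

open MvPolynomial

variable {R n ι : Type*} [CommRing R] [Fintype n] [DecidableEq n] [DecidableEq ι]

-- The variable `(i, true, k, l)` stands for the `(k, l)` entry of the `i`-th unknown, and
-- `(i, false, k, l)` for that of its inverse.
noncomputable def genericMatrix (i : ι) (b : Bool) :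
    Matrix n n (MvPolynomial (ι × Bool × n × n) R) :=
  Matrix.of fun k l => X (i, b, k, l)

noncomputable def wordMatrix (s : FreeGroup ι) : Matrix n n (MvPolynomial (ι × Bool × n × n) R) :=
  (s.toWord.map fun p => genericMatrix p.1 p.2).prod

noncomputable def wordIdeal (s : FreeGroup ι) : Ideal (MvPolynomial (ι × Bool × n × n) R) :=
  Ideal.span (Set.range fun kl : n × n => (wordMatrix s - 1) kl.1 kl.2)

noncomputable def evalGeneric (g : ι → GL n R) : MvPolynomial (ι × Bool × n × n) R →+* R :=
  eval fun q => (cond q.2.1 (g q.1) (g q.1)⁻¹ : GL n R) q.2.2.1 q.2.2.2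

theorem mapMatrix_wordMatrix (g : ι → GL n R) (s : FreeGroup ι) :
    (evalGeneric g).mapMatrix (wordMatrix s) = (FreeGroup.lift g s : Matrix n n R) := by
  conv_rhs => rw [← FreeGroup.mk_toWord (x := s), FreeGroup.lift_mk, ← Units.coeHom_apply,
    map_list_prod]
  rw [wordMatrix, map_list_prod, List.map_map, List.map_map]
  congr 1
  refine List.map_congr_left fun ⟨i, b⟩ _ => ?_
  ext k l
  cases b <;> simp [genericMatrix, evalGeneric]

theorem lift_eq_one_iff_wordIdeal_le_ker (g : ι → GL n R) (s : FreeGroup ι) :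
    FreeGroup.lift g s = 1 ↔ wordIdeal s ≤ RingHom.ker (evalGeneric g) := by
  rw [wordIdeal, Ideal.span_le, Set.range_subset_iff, ← Units.val_eq_one, ← mapMatrix_wordMatrix,
    ← sub_eq_zero, ← map_one (evalGeneric g).mapMatrix, ← map_sub]
  simp [← Matrix.ext_iff, RingHom.mem_ker]

theorem hasFiniteSubsystems_lift_eq_one [IsNoetherianRing R] [Finite ι] :
    HasFiniteSubsystems fun s : FreeGroup ι => {g : ι → GL n R | FreeGroup.lift g s = 1} := by
  have hIdeal := hasFiniteSubsystems_Ici (α := Ideal (MvPolynomial (ι × Bool × n × n) R))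
  convert ((hIdeal.preimage RingHom.ker).preimage evalGeneric).comp wordIdeal using 1
  ext s g
  exact lift_eq_one_iff_wordIdeal_le_ker g s

end Matrix.GeneralLinearGroup

namespace Sanov

-- The conjugate of `!![1, 3; 0, 1]` by `!![1, 0; c, 1]`: in the coordinates `(v 0, shear c v)`
-- it acts as `(x, w) ↦ (x + 3 * w, w)`.
def generator (c : ℚ) : GL (Fin 2) ℚ :=
  ⟨!![1 - 3 * c, 3; -3 * c ^ 2, 1 + 3 * c], !![1 + 3 * c, -3; 3 * c ^ 2, 1 - 3 * c],
    by ext i j; fin_cases i <;> fin_cases j <;> simp [Matrix.mul_apply] <;> ring,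
    by ext i j; fin_cases i <;> fin_cases j <;> simp [Matrix.mul_apply] <;> ring⟩

def shear (c : ℚ) (v : Fin 2 → ℚ) : ℚ := v 1 - c * v 0

theorem generator_smul (c : ℚ) (v : Fin 2 → ℚ) :
    (generator c • v) 0 = v 0 + 3 * shear c v ∧ shear c (generator c • v) = shear c v := by
  simp only [generator, shear, Matrix.GeneralLinearGroup.fin_two_smul]
  constructor <;> simp <;> ring

theorem generator_inv_smul (c : ℚ) (v : Fin 2 → ℚ) :
    ((generator c)⁻¹ • v) 0 = v 0 - 3 * shear c v ∧
      shear c ((generator c)⁻¹ • v) = shear c v := by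
  simp only [generator, shear, Matrix.GeneralLinearGroup.fin_two_smul]
  constructor <;> simp <;> ring

theorem push_forward {x w : ℚ} (h0 : x ≠ 0 ∨ w ≠ 0) (h : ¬(w ^ 2 < x ^ 2 ∧ x * w < 0)) :
    w ^ 2 < (x + 3 * w) ^ 2 ∧ 0 ≤ (x + 3 * w) * w := by
  have : 0 < x ^ 2 + w ^ 2 := by rcases h0 with h0 | h0 <;> positivity
  rw [not_and_or, not_lt, not_lt] at h
  rcases h with h | h <;> constructor <;> nlinarith [sq_nonneg (x + w), sq_nonneg (x - w)]

theorem push_backward {x w : ℚ} (h0 : x ≠ 0 ∨ w ≠ 0) (h : ¬(w ^ 2 < x ^ 2 ∧ 0 ≤ x * w)) :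
    w ^ 2 < (x - 3 * w) ^ 2 ∧ (x - 3 * w) * w < 0 := by
  have : 0 < x ^ 2 + w ^ 2 := by rcases h0 with h0 | h0 <;> positivity
  rw [not_and_or, not_lt, not_le] at h
  rcases h with h | h <;> constructor <;> nlinarith [sq_nonneg (x + w), sq_nonneg (x - w)]

theorem not_mem_cone_of_mem_cone {c c' : ℚ} (h : 4 ≤ (c - c') ^ 2) {v : Fin 2 → ℚ}
    (hv : shear c v ^ 2 < v 0 ^ 2) : ¬shear c' v ^ 2 < v 0 ^ 2 := by
  unfold shear at hv ⊢
  nlinarith [sq_nonneg (v 1 - c * v 0 + (v 1 - c' * v 0))]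

theorem four_le_sq_two_mul_sub {i j : ℕ} (h : i ≠ j) : (4 : ℚ) ≤ (2 * i - 2 * j) ^ 2 := by
  have : (1 : ℤ) ≤ ((i : ℤ) - j) ^ 2 := by
    rcases lt_or_gt_of_ne h with h | h <;> nlinarith
  have : (1 : ℚ) ≤ ((i : ℚ) - j) ^ 2 := by exact_mod_cast this
  nlinarith

def nonzeroVectors : SubMulAction (GL (Fin 2) ℚ) (Fin 2 → ℚ) where
  carrier := {v | v ≠ 0}
  smul_mem' g _ hv := (smul_ne_zero_iff_ne g).mpr hv

theorem ne_zero_or_shear_ne_zero (c : ℚ) (v : nonzeroVectors) : v.1 0 ≠ 0 ∨ shear c v ≠ 0 := by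
  by_contra! ⟨h0, h1⟩
  simp only [shear, h0, mul_zero, sub_zero] at h1
  exact v.2 (funext fun i => by fin_cases i <;> simp [h0, h1])

-- Both powers of a parabolic push vectors towards its fixed line, so the cone around that line
-- is split by the sign of `v 0 * shear c v` into the sets for positive and for negative powers.
def attracting (c : ℚ) : Set nonzeroVectors :=
  {v | shear c v ^ 2 < v.1 0 ^ 2 ∧ 0 ≤ v.1 0 * shear c v}

def repelling (c : ℚ) : Set nonzeroVectors :=
  {v | shear c v ^ 2 < v.1 0 ^ 2 ∧ v.1 0 * shear c v < 0}

theorem injective_lift_generator :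
    Function.Injective (FreeGroup.lift fun i : ℕ => generator (2 * i)) := by
  refine FreeGroup.injective_lift_of_ping_pong _ (fun i => attracting (2 * i))
    (fun i => repelling (2 * i))
    (fun i => ⟨⟨![1, 2 * i], fun h => by simpa using congrFun h 0⟩, ?_⟩)
    (fun i j hij => ?_) (fun i j hij => ?_) (fun i j => ?_) (fun i => ?_) (fun i => ?_)
  · simp [attracting, shear]
  · exact Set.disjoint_left.mpr fun v hv hv' =>
      not_mem_cone_of_mem_cone (four_le_sq_two_mul_sub hij) hv.1 hv'.1
  · exact Set.disjoint_left.mpr fun v hv hv' =>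
      not_mem_cone_of_mem_cone (four_le_sq_two_mul_sub hij) hv.1 hv'.1
  · refine Set.disjoint_left.mpr fun v hv hv' => ?_
    obtain rfl | hij := eq_or_ne i j
    · exact not_le.mpr hv'.2 hv.2
    · exact not_mem_cone_of_mem_cone (four_le_sq_two_mul_sub hij) hv.1 hv'.1
  · rintro _ ⟨v, hv, rfl⟩
    obtain ⟨h0, hshear⟩ := generator_smul (2 * i) v
    simp only [attracting, Set.mem_ofPred_eq, SubMulAction.val_smul, h0, hshear]
    exact push_forward (ne_zero_or_shear_ne_zero _ v) hv
  · rintro _ ⟨v, hv, rfl⟩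
    obtain ⟨h0, hshear⟩ := generator_inv_smul (2 * i) v
    simp only [repelling, Set.mem_ofPred_eq, SubMulAction.val_smul, Pi.inv_apply, h0, hshear]
    exact push_backward (ne_zero_or_shear_ne_zero _ v) hv

theorem exists_injective_freeGroup (α : Type*) [Countable α] :
    ∃ φ : FreeGroup α →* GL (Fin 2) ℚ, Function.Injective φ := by
  obtain ⟨e, he⟩ := Countable.exists_injective_nat α
  exact ⟨(FreeGroup.lift _).comp (FreeGroup.map e),
    injective_lift_generator.comp (FreeGroup.map_injective he)⟩

end Sanov

theorem FreeGroup.hasFiniteSubsystems_lift_eq_one {α ι : Type*} [Countable α] [Finite ι] :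
    HasFiniteSubsystems fun s : FreeGroup ι => {g : ι → FreeGroup α | FreeGroup.lift g s = 1} := by
  classical
  obtain ⟨φ, hφ⟩ := Sanov.exists_injective_freeGroup α
  exact hasFiniteSubsystems_lift_eq_one_of_injective hφ
    Matrix.GeneralLinearGroup.hasFiniteSubsystems_lift_eq_one

abbrev WreathProduct (M C : Type*) [Group M] := (C → M) ⋊[mulAutArrow] Equiv.Perm C

namespace WreathProduct

variable {M N C ι : Type*} [Group M] [Group N]

theorem left_mul_apply (w w' : WreathProduct M C) (c : C) :
    (w * w').left c = w.left c * w'.left (w.right.symm c) := rfl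

theorem left_inv_apply (w : WreathProduct M C) (c : C) :
    w⁻¹.left c = (w.left (w.right c))⁻¹ := by
  change (w.left ((w.right⁻¹)⁻¹ c))⁻¹ = _
  rw [inv_inv]

def mapBase (κ : M →* N) : WreathProduct M C →* WreathProduct N C :=
  SemidirectProduct.map (κ.compLeft C) (MonoidHom.id _) fun _ => rfl

theorem mapBase_left (κ : M →* N) (w : WreathProduct M C) (c : C) :
    (mapBase κ w).left c = κ (w.left c) := rfl

def universal (σ : ι → Equiv.Perm C) : FreeGroup ι →* WreathProduct (FreeGroup (ι × C)) C :=
  FreeGroup.lift fun i => ⟨fun c => FreeGroup.of (i, c), σ i⟩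

-- The base coordinates of a word in elements of the wreath product are fixed words, depending only
-- on the permutation parts of the letters, in the base coordinates of the letters.
theorem lift_eq_mapBase_comp_universal (h : ι → WreathProduct M C) :
    FreeGroup.lift h = (mapBase (FreeGroup.lift fun p : ι × C => (h p.1).left p.2)).comp
      (universal fun i => (h i).right) :=
  FreeGroup.ext_hom _ _ fun i => by
    ext c <;> simp [universal, mapBase, SemidirectProduct.map]

end WreathProduct

namespace SchreierCore

open WreathProduct
open FreeGroup (of mk)

noncomputable section

variable {α : Type*} (P : Subgroup (FreeGroup α))

def basepoint : FreeGroup α ⧸ P := QuotientGroup.mk 1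

open Classical in
def cosetRep (x : FreeGroup α ⧸ P) : FreeGroup α := if x = basepoint P then 1 else x.out

variable {P}

theorem mk_cosetRep (x : FreeGroup α ⧸ P) : (cosetRep P x : FreeGroup α ⧸ P) = x := by
  unfold cosetRep
  split_ifs with h
  · exact h.symm
  · exact QuotientGroup.out_eq' x

theorem cosetRep_basepoint : cosetRep P (basepoint P) = 1 := by
  simp [cosetRep]

theorem smul_basepoint {g : FreeGroup α} (hg : g ∈ P) : g • basepoint P = basepoint P := by
  simpa [basepoint, QuotientGroup.eq] using hg

theorem cosetRep_inv_mul_mul_mem (g : FreeGroup α) (x : FreeGroup α ⧸ P) :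
    (cosetRep P x)⁻¹ * g * cosetRep P (g⁻¹ • x) ∈ P := by
  have h : ((g⁻¹ * cosetRep P x : FreeGroup α) : FreeGroup α ⧸ P) = cosetRep P (g⁻¹ • x) := by
    rw [mk_cosetRep, ← smul_eq_mul, ← MulAction.Quotient.smul_coe, mk_cosetRep]
  simpa [QuotientGroup.eq, mul_assoc] using h

variable (C : Finset (FreeGroup α ⧸ P))

-- M. Hall's completion: the partial bijection `x ↦ a • x` of the finite set `C` extends to a
-- permutation of `C`.
open Classical in
def letterPerm (a : α) : Equiv.Perm C :=
  Equiv.extendSubtype (p := fun c : C => of a • (c : FreeGroup α ⧸ P) ∈ C)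
    (q := fun c : C => (of a)⁻¹ • (c : FreeGroup α ⧸ P) ∈ C)
    { toFun c := ⟨⟨of a • c.1.1, c.2⟩, by simp⟩
      invFun c := ⟨⟨(of a)⁻¹ • c.1.1, c.2⟩, by simp⟩
      left_inv c := by simp
      right_inv c := by simp }

open Classical in
theorem letterPerm_apply (a : α) (c : C) (h : of a • (c : FreeGroup α ⧸ P) ∈ C) :
    ((letterPerm C a c : C) : FreeGroup α ⧸ P) = of a • (c : FreeGroup α ⧸ P) := by
  rw [letterPerm, Equiv.extendSubtype_apply_of_mem _ c h]
  rfl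

theorem letterPerm_symm_apply (a : α) (c : C) (h : (of a)⁻¹ • (c : FreeGroup α ⧸ P) ∈ C) :
    (((letterPerm C a).symm c : C) : FreeGroup α ⧸ P) = (of a)⁻¹ • (c : FreeGroup α ⧸ P) := by
  have : letterPerm C a ⟨_, h⟩ = c :=
    Subtype.ext <| (letterPerm_apply C a _ (by simp)).trans (by simp)
  conv_lhs => rw [← this, Equiv.symm_apply_apply]

open Classical in
def letterCocycle (a : α) (c : C) : P :=
  if (of a)⁻¹ • (c : FreeGroup α ⧸ P) ∈ C then
    ⟨_, cosetRep_inv_mul_mul_mem (of a) c⟩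
  else 1

def schreierHom : FreeGroup α →* WreathProduct P C :=
  FreeGroup.lift fun a => ⟨letterCocycle C a, letterPerm C a⟩

-- Along paths inside `C`, `schreierHom C` follows the genuine coset action and its Schreier cocycle.
def Tracks (g : FreeGroup α) (c : C) : Prop :=
  (((schreierHom C g).right.symm c : C) : FreeGroup α ⧸ P) = g⁻¹ • (c : FreeGroup α ⧸ P) ∧
    ((schreierHom C g).left c : FreeGroup α) = (cosetRep P c)⁻¹ * g * cosetRep P (g⁻¹ • c)

variable {C}

theorem tracks_one (c : C) : Tracks C 1 c := by
  simp [Tracks, Equiv.Perm.one_def]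

theorem Tracks.mul {g h : FreeGroup α} {c : C} (hg : Tracks C g c)
    (hh : Tracks C h ((schreierHom C g).right.symm c)) : Tracks C (g * h) c := by
  obtain ⟨hg₁, hg₂⟩ := hg
  obtain ⟨hh₁, hh₂⟩ := hh
  refine ⟨?_, ?_⟩
  · simp [Equiv.Perm.mul_def, mul_smul, hh₁, hg₁]
  · rw [map_mul, left_mul_apply, Subgroup.coe_mul, hg₂, hh₂, hg₁]
    simp [mul_smul, mul_assoc]

theorem Tracks.inv {g : FreeGroup α} {c : C} (hg : Tracks C g c) :
    Tracks C g⁻¹ ((schreierHom C g).right.symm c) := by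
  obtain ⟨hg₁, hg₂⟩ := hg
  refine ⟨?_, ?_⟩
  · simp [Equiv.Perm.inv_def, hg₁]
  · rw [map_inv, left_inv_apply]
    simp [hg₂, hg₁, mul_assoc]

theorem tracks_of (a : α) (c : C) (h : (of a)⁻¹ • (c : FreeGroup α ⧸ P) ∈ C) :
    Tracks C (of a) c := by
  refine ⟨?_, ?_⟩
  · simpa [schreierHom] using letterPerm_symm_apply C a c h
  · simp [schreierHom, letterCocycle, h]

theorem tracks_mk_singleton (p : α × Bool) (c : C)
    (h : (mk [p])⁻¹ • (c : FreeGroup α ⧸ P) ∈ C) : Tracks C (mk [p]) c := by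
  obtain ⟨a, _ | _⟩ := p
  · change (of a)⁻¹⁻¹ • (c : FreeGroup α ⧸ P) ∈ C at h
    rw [inv_inv] at h
    have := (tracks_of a (letterPerm C a c) (by simp [letterPerm_apply C a c h])).inv
    simp only [schreierHom, FreeGroup.lift_apply_of, Equiv.symm_apply_apply] at this
    exact this
  · exact tracks_of a c h

theorem tracks_mk (L : List (α × Bool)) (c : C)
    (h : ∀ L' ∈ L.inits, (mk L')⁻¹ • (c : FreeGroup α ⧸ P) ∈ C) : Tracks C (mk L) c := by
  induction L generalizing c with
  | nil => exact tracks_one c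
  | cons p L ih =>
    have hp := tracks_mk_singleton p c (h [p] (by simp))
    refine FreeGroup.mul_mk (L₁ := [p]) ▸ hp.mul (ih _ fun L' hL' => ?_)
    rw [hp.1, ← mul_smul, ← mul_inv_rev, FreeGroup.mul_mk]
    exact h _ (by simp [hL'])

theorem Tracks.symm_apply_eq_self {g : FreeGroup α} {c : C} (h : Tracks C g c) (hg : g ∈ P)
    (hc : (c : FreeGroup α ⧸ P) = basepoint P) : (schreierHom C g).right.symm c = c :=
  Subtype.ext <| by rw [h.1, hc, smul_basepoint (inv_mem hg)]

theorem Tracks.left_eq_self {g : FreeGroup α} {c : C} (h : Tracks C g c) (hg : g ∈ P)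
    (hc : (c : FreeGroup α ⧸ P) = basepoint P) : ((schreierHom C g).left c : FreeGroup α) = g := by
  rw [h.2, hc, smul_basepoint (inv_mem hg), cosetRep_basepoint, inv_one, one_mul, mul_one]

-- The cosets visited when reading the reduced words of the generators from the base coset.
variable (P) in
open scoped Classical in
def wordCore (gens : Finset (FreeGroup α)) : Finset (FreeGroup α ⧸ P) :=
  insert (basepoint P)
    (gens.biUnion fun w => (w.toWord.inits.map fun L => (mk L)⁻¹ • basepoint P).toFinset)

variable (P) in
def coreBasepoint (gens : Finset (FreeGroup α)) : wordCore P gens := by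
  classical exact ⟨basepoint P, Finset.mem_insert_self _ _⟩

theorem tracks_coreBasepoint {gens : Finset (FreeGroup α)} {w : FreeGroup α} (hw : w ∈ gens) :
    Tracks (wordCore P gens) w (coreBasepoint P gens) := by
  classical
  have := tracks_mk w.toWord (coreBasepoint P gens) fun L hL =>
    Finset.mem_insert_of_mem <| Finset.mem_biUnion.mpr
      ⟨w, hw, List.mem_toFinset.mpr (List.mem_map.mpr ⟨L, hL, rfl⟩)⟩
  rwa [FreeGroup.mk_toWord] at this

theorem mem_iff_left_coreBasepoint {gens : Finset (FreeGroup α)}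
    (hgens : Subgroup.closure (gens : Set (FreeGroup α)) = P) (g : FreeGroup α) :
    g ∈ P ↔ ((schreierHom (wordCore P gens) g).left (coreBasepoint P gens) : FreeGroup α) = g := by
  refine ⟨fun hg => ?_, fun h => h ▸ SetLike.coe_mem _⟩
  suffices Tracks (wordCore P gens) g (coreBasepoint P gens) from
    this.left_eq_self hg rfl
  rw [← hgens] at hg
  induction hg using Subgroup.closure_induction with
  | mem w hw => exact tracks_coreBasepoint hw
  | one => exact tracks_one _
  | mul g h hg _ ihg ihh => exact ihg.mul (by rwa [ihg.symm_apply_eq_self (hgens ▸ hg) rfl])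
  | inv g hg ih => simpa only [ih.symm_apply_eq_self (hgens ▸ hg) rfl] using ih.inv

variable {ι : Type*}

variable (C) in
def coordinates (g : ι → FreeGroup α) : ι ⊕ ι × C → FreeGroup α :=
  Sum.elim g fun p => ((schreierHom C (g p.1)).left p.2 : FreeGroup α)

def membershipWord (σ : ι → Equiv.Perm C) (c₀ : C) (s : FreeGroup ι) : FreeGroup (ι ⊕ ι × C) :=
  FreeGroup.map Sum.inr ((universal σ s).left c₀) * (FreeGroup.map Sum.inl s)⁻¹

theorem lift_coordinates_map_inl (g : ι → FreeGroup α) (s : FreeGroup ι) :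
    FreeGroup.lift (coordinates C g) (FreeGroup.map Sum.inl s) = FreeGroup.lift g s :=
  DFunLike.congr_fun (FreeGroup.ext_hom ((FreeGroup.lift _).comp (FreeGroup.map Sum.inl)) _
    fun i => by simp [coordinates]) s

theorem left_schreierHom_lift (g : ι → FreeGroup α) (s : FreeGroup ι) (c : C) :
    ((schreierHom C (FreeGroup.lift g s)).left c : FreeGroup α) =
      FreeGroup.lift (coordinates C g)
        (FreeGroup.map Sum.inr ((universal (fun i => (schreierHom C (g i)).right) s).left c)) := by
  have h : schreierHom C (FreeGroup.lift g s) = FreeGroup.lift (fun i => schreierHom C (g i)) s :=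
    FreeGroup.lift_unique ((schreierHom C).comp (FreeGroup.lift g)) (by simp)
  rw [h, lift_eq_mapBase_comp_universal, MonoidHom.comp_apply, mapBase_left]
  exact DFunLike.congr_fun (FreeGroup.ext_hom (P.subtype.comp _)
    ((FreeGroup.lift (coordinates C g)).comp (FreeGroup.map Sum.inr))
    fun p => by simp [coordinates]) _

theorem lift_mem_iff {gens : Finset (FreeGroup α)}
    (hgens : Subgroup.closure (gens : Set (FreeGroup α)) = P) (g : ι → FreeGroup α)
    (s : FreeGroup ι) :
    FreeGroup.lift g s ∈ P ↔
      FreeGroup.lift (coordinates (wordCore P gens) g)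
        (membershipWord (fun i => (schreierHom (wordCore P gens) (g i)).right)
          (coreBasepoint P gens) s) = 1 := by
  rw [mem_iff_left_coreBasepoint hgens, membershipWord, map_mul, map_inv, mul_inv_eq_one,
    left_schreierHom_lift, lift_coordinates_map_inl]

end

end SchreierCore

open SchreierCore in
theorem hasFiniteSubsystems_lift_mem_of_fg {α ι : Type*} [Countable α] [Finite ι]
    {P : Subgroup (FreeGroup α)} (hP : P.FG) :
    HasFiniteSubsystems fun s : FreeGroup ι => {g : ι → FreeGroup α | FreeGroup.lift g s ∈ P} := by
  classical
  obtain ⟨gens, hgens⟩ := hP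
  let C := wordCore P gens
  let π : (ι → FreeGroup α) → ι → Equiv.Perm C := fun g i => (schreierHom C (g i)).right
  refine HasFiniteSubsystems.of_fibers π fun σ => ?_
  convert (FreeGroup.hasFiniteSubsystems_lift_eq_one.comp
    (membershipWord σ (coreBasepoint P gens))).preimage
    fun g : π ⁻¹' {σ} => coordinates C g.1 using 1
  ext s ⟨g, hg : π g = σ⟩
  subst hg
  exact lift_mem_iff hgens g s

/-- Every finitely generated subgroup of a finitely generated free group is
quasi-algebraic as a subset. -/
theorem fg_subgroup_free_quasiAlgebraic (n : ℕ) (P : Subgroup (FreeGroup (Fin n)))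
    (hP : P.FG) :
    QuasiAlgebraic (FreeGroup (Fin n)) (P : Set (FreeGroup (Fin n))) :=
  quasiAlgebraic_of_hasFiniteSubsystems fun _ => hasFiniteSubsystems_lift_mem_of_fg hP
end

section
/- Let H be a group, let K ⊆ H be a quasi-algebraic subset of H, let Q be a finite group, and let π : H^Q → H be the projection of the direct power H^Q = {functions Q → H} onto the coordinate of the identity element of Q. Then π^{-1}(K) is quasi-algebraic in H^Q. -/
/-!
Quasi-algebraicity pulls back along any group homomorphism `φ : G →* H`: evaluating a word
commutes with `φ`, so the solution set of `S` relative to `φ⁻¹(A)` is the preimage, under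
`φ` applied coordinatewise, of the solution set relative to `A`; hence a finite subsystem
that works for `A` works for `φ⁻¹(A)`. The projection `H^Q → H` is such a homomorphism.
-/

section Pullback

variable {G H : Type*} [Group G] [Group H]

theorem FreeGroup.map_lift {α : Type*} (φ : G →* H) (g : α → G) (s : FreeGroup α) :
    φ (FreeGroup.lift g s) = FreeGroup.lift (φ ∘ g) s := by
  have hcomp : φ.comp (FreeGroup.lift g) = FreeGroup.lift (φ ∘ g) :=
    FreeGroup.ext_hom _ _ fun _ => by simp
  exact DFunLike.congr_fun hcomp s

theorem eqnSolutions_preimage (φ : G →* H) (A : Set H) {m : ℕ}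
    (S : Set (FreeGroup (Fin m))) :
    eqnSolutions (φ ⁻¹' A) S = (φ ∘ ·) ⁻¹' eqnSolutions A S := by
  ext g
  simp only [eqnSolutions, Set.mem_ofPred_eq, Set.mem_preimage, FreeGroup.map_lift]

theorem QuasiAlgebraic.preimage {A : Set H} (hA : QuasiAlgebraic H A) (φ : G →* H) :
    QuasiAlgebraic G (φ ⁻¹' A) := by
  intro m hm S
  obtain ⟨S₀, hS₀, hsol⟩ := hA m hm S
  exact ⟨S₀, hS₀, by rw [eqnSolutions_preimage, eqnSolutions_preimage, hsol]⟩

end Pullback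

theorem pi_preimage_quasiAlgebraic_general (H : Type*) [Group H] (K : Set H)
    (hK : QuasiAlgebraic H K) (Q : Type*) [Group Q] :
    QuasiAlgebraic (Q → H) {f : Q → H | f 1 ∈ K} :=
  hK.preimage (Pi.evalMonoidHom (fun _ : Q => H) 1)

/-- If `K` is quasi-algebraic in `H` and `Q` is a finite group, then the preimage of `K`
under the projection `H^Q → H` onto the coordinate of `1 ∈ Q` is quasi-algebraic in the
direct power `H^Q`. -/
theorem pi_preimage_quasiAlgebraic (H : Type*) [Group H] (K : Set H)
    (hK : QuasiAlgebraic H K) (Q : Type*) [Group Q] [Finite Q] :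
    QuasiAlgebraic (Q → H) {f : Q → H | f 1 ∈ K} :=
  pi_preimage_quasiAlgebraic_general H K hK Q
end

section
/- Let φ be an automorphism of the free group F_n such that φ^k = ad_a for some integer k ≥ 1 and some a ∈ F_n (i.e. φ has finite order in Out(F_n)). Then G = F_n ⋊_φ ℤ contains a subgroup of finite index that is isomorphic to the direct product F_n × ℤ. -/
/-!
Since `φ ^ k` is conjugation by `a`, the element `a⁻¹ t ^ k` of `F ⋊_φ ℤ` (with `t` the generator
of `ℤ`) commutes with `F`, so `(f, m) ↦ f (a⁻¹ t ^ k) ^ m` is a homomorphism `F × ℤ → F ⋊_φ ℤ`.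
It is injective because the projection to `ℤ` sends `(f, m)` to `m k`, and its image contains the
kernel `F` of that projection and maps onto `k ℤ`, so it has index `|k|`.
-/

/-- The mapping torus `F ⋊_φ ℤ` of an automorphism `φ` of `F`: the semidirect product
in which the generator `1` of `ℤ` acts on `F` by `φ`. -/
abbrev MappingTorus (F : Type*) [Group F] (φ : MulAut F) :=
  SemidirectProduct F (Multiplicative ℤ) (zpowersHom (MulAut F) φ)

namespace MappingTorus

open SemidirectProduct

variable {F : Type*} [Group F] {φ : MulAut F} {k : ℤ} {a : F}

def untwistedPower (φ : MulAut F) (k : ℤ) (a : F) : MappingTorus F φ :=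
  ⟨a⁻¹, Multiplicative.ofAdd k⟩

@[simp]
lemma rightHom_untwistedPower : rightHom (untwistedPower φ k a) = Multiplicative.ofAdd k := rfl

lemma commute_inl_untwistedPower (hφ : φ ^ k = MulAut.conj a) (f : F) :
    Commute (inl f) (untwistedPower φ k a) := by
  have hact : zpowersHom (MulAut F) φ (Multiplicative.ofAdd k) f = a * f * a⁻¹ := by
    simp [zpowersHom_apply, hφ]
  ext
  · simp only [mul_left, left_inl, right_inl, map_one, MulAut.one_apply, untwistedPower, hact]
    group
  · simp [untwistedPower]

noncomputable def prodHom (hφ : φ ^ k = MulAut.conj a) :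
    F × Multiplicative ℤ →* MappingTorus F φ :=
  MonoidHom.noncommCoprod inl (zpowersHom _ (untwistedPower φ k a))
    fun f _ => (commute_inl_untwistedPower hφ f).zpow_right _

lemma prodHom_apply (hφ : φ ^ k = MulAut.conj a) (p : F × Multiplicative ℤ) :
    prodHom hφ p = inl p.1 * untwistedPower φ k a ^ Multiplicative.toAdd p.2 := rfl

lemma rightHom_prodHom (hφ : φ ^ k = MulAut.conj a) (p : F × Multiplicative ℤ) :
    rightHom (prodHom hφ p) = p.2 ^ k := by
  rw [prodHom_apply, map_mul, map_zpow, rightHom_inl, one_mul, rightHom_untwistedPower,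
    ← ofAdd_toAdd p.2, ← ofAdd_zsmul, ← ofAdd_zsmul, toAdd_ofAdd, smul_eq_mul, smul_eq_mul, mul_comm]

lemma prodHom_injective (hk : k ≠ 0) (hφ : φ ^ k = MulAut.conj a) :
    Function.Injective (prodHom hφ) := by
  rw [injective_iff_map_eq_one]
  rintro ⟨f, m⟩ h
  have hm : m = 1 := by
    have := congrArg rightHom h
    rw [rightHom_prodHom, map_one] at this
    exact (IsMulTorsionFree.zpow_eq_one_iff_left hk).1 this
  subst hm
  have hf : f = 1 := by simpa [prodHom_apply] using congrArg left h
  simp [hf]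

lemma comap_rightHom_le_range_prodHom (hφ : φ ^ k = MulAut.conj a) :
    (AddSubgroup.zmultiples k).toSubgroup.comap rightHom ≤ (prodHom hφ).range := by
  intro x hx
  obtain ⟨m, hm⟩ := hx
  have hker : x * (untwistedPower φ k a ^ m)⁻¹ ∈ (inl : F →* MappingTorus F φ).range := by
    rw [range_inl_eq_ker_rightHom, MonoidHom.mem_ker, map_mul, map_inv, map_zpow,
      rightHom_untwistedPower, mul_inv_eq_one, ← ofAdd_zsmul]
    exact congrArg Multiplicative.ofAdd hm.symm
  obtain ⟨f, hf⟩ := hker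
  exact ⟨(f, Multiplicative.ofAdd m), by simp [prodHom_apply, hf]⟩

lemma finiteIndex_range_prodHom (hk : k ≠ 0) (hφ : φ ^ k = MulAut.conj a) :
    (prodHom hφ).range.FiniteIndex := by
  have : ((AddSubgroup.zmultiples k).toSubgroup.comap
      (rightHom : MappingTorus F φ →* _)).FiniteIndex := by
    constructor
    rw [Subgroup.index_comap_of_surjective _ rightHom_surjective, AddSubgroup.index_toSubgroup,
      Int.index_zmultiples]
    simpa using hk
  exact Subgroup.finiteIndex_of_le (comap_rightHom_le_range_prodHom hφ)

theorem exists_finiteIndex_mulEquiv_prod (hk : k ≠ 0) (hφ : φ ^ k = MulAut.conj a) :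
    ∃ H : Subgroup (MappingTorus F φ), H.FiniteIndex ∧ Nonempty (H ≃* F × Multiplicative ℤ) :=
  ⟨_, finiteIndex_range_prodHom hk hφ, ⟨(MonoidHom.ofInjective (prodHom_injective hk hφ)).symm⟩⟩

end MappingTorus

/-- If some positive power of `φ` is inner (finite order in `Out(F_n)`), then
`F_n ⋊_φ ℤ` contains a finite-index subgroup isomorphic to `F_n × ℤ`. -/
theorem finiteOrderOut_virtually_product (n : ℕ) (φ : MulAut (FreeGroup (Fin n)))
    (k : ℕ) (hk : 1 ≤ k) (a : FreeGroup (Fin n)) (hφ : φ ^ k = MulAut.conj a) :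
    ∃ H : Subgroup (MappingTorus (FreeGroup (Fin n)) φ), H.FiniteIndex ∧
      Nonempty (H ≃* FreeGroup (Fin n) × Multiplicative ℤ) :=
  MappingTorus.exists_finiteIndex_mulEquiv_prod (k := k) (by omega) (by rwa [zpow_natCast])
end
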